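/- arXiv:1805.08796 — 6 statements merged into one kernel-verified Lean document; each statement's English description precedes it below -/
import Mathlib

section
/- For every g ∈ GL_n(𝔽_q), the reflection length ℓ(g) equals the rank of the matrix g − 1, i.e. ℓ(g) = n − dim {v ∈ 𝔽_q^n : g v = v}. -/
open Matrix

variable {F : Type*} [Field F] [Fintype F] [DecidableEq F]

/-- An element of `GL n F` is a reflection if its fixed point subspace has
codimension one, i.e. `s - 1` has rank one. -/
def IsReflection {n : ℕ} (s : GL (Fin n) F) : Prop :=
  ((s : Matrix (Fin n) (Fin n) F) - 1).rank = 1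

/-- The reflection length of `g`: the least `k` such that `g` is a product of
`k` reflections. -/
noncomputable def reflLength {n : ℕ} (g : GL (Fin n) F) : ℕ :=
  sInf {k | ∃ l : List (GL (Fin n) F),
    l.length = k ∧ (∀ s ∈ l, IsReflection s) ∧ l.prod = g}

/-! Since `g h - 1 = g (h - 1) + (g - 1)`, the map `g ↦ rank (g - 1)` is subadditive, so a
product of `k` reflections has `rank (g - 1) ≤ k`. Conversely, if `g ≠ 1`
take `v` with `g v ≠ v` and a linear form `u` vanishing on the fixed space `W` of `g` with
`u (g v) = 1` and `u v ≠ 0`. Then `s = 1 + (v - g v) uᵀ` is a reflection (`det s = u v`),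
and `s g` fixes `W + K v`, so `rank (s g - 1) < rank (g - 1)`; induct on the rank. -/

open Module LinearMap

theorem Module.exists_dual_apply_ne_zero_and_ne_zero {K V : Type*} [Field K] [AddCommGroup V]
    [Module K V] {a b : V} (ha : a ≠ 0) (hb : b ≠ 0) :
    ∃ φ : Dual K V, φ a ≠ 0 ∧ φ b ≠ 0 := by
  obtain ⟨φ, hφa⟩ : ∃ φ : Dual K V, φ a ≠ 0 := by
    simpa using mt (forall_dual_apply_eq_zero_iff K a).mp ha
  obtain ⟨ψ, hψb⟩ : ∃ ψ : Dual K V, ψ b ≠ 0 := by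
    simpa using mt (forall_dual_apply_eq_zero_iff K b).mp hb
  by_cases hφb : φ b = 0
  · by_cases hψa : ψ a = 0
    · exact ⟨φ + ψ, by simp [hφa, hψa], by simp [hφb, hψb]⟩
    · exact ⟨ψ, hψa, hψb⟩
  · exact ⟨φ, hφa, hφb⟩

theorem Submodule.exists_dotProduct_eq_one_ne_zero_of_notMem {K ι : Type*} [Field K] [Fintype ι]
    [DecidableEq ι] (W : Submodule K (ι → K)) {a b : ι → K} (ha : a ∉ W) (hb : b ∉ W) :
    ∃ u : ι → K, (∀ x ∈ W, u ⬝ᵥ x = 0) ∧ u ⬝ᵥ a = 1 ∧ u ⬝ᵥ b ≠ 0 := by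
  obtain ⟨φ, hφa, hφb⟩ := exists_dual_apply_ne_zero_and_ne_zero (K := K)
    (a := W.mkQ a) (b := W.mkQ b) (by simpa using ha) (by simpa using hb)
  obtain ⟨u, hu⟩ := (dotProductEquiv K ι).surjective (φ ∘ₗ W.mkQ)
  have hdot (x : ι → K) : u ⬝ᵥ x = φ (W.mkQ x) := by
    rw [← dotProductEquiv_apply_apply, hu, LinearMap.comp_apply]
  refine ⟨(φ (W.mkQ a))⁻¹ • u, fun x hx => ?_, ?_, ?_⟩
  · simp [hdot, (Submodule.Quotient.mk_eq_zero W).mpr hx]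
  · rw [smul_dotProduct, hdot, smul_eq_mul, inv_mul_cancel₀ hφa]
  · rw [smul_dotProduct, hdot, smul_eq_mul]
    exact mul_ne_zero (inv_ne_zero hφa) hφb

namespace Matrix

variable {K : Type*} [Field K]

theorem rank_add_le {m n : Type*} [Fintype n] (A B : Matrix m n K) :
    (A + B).rank ≤ A.rank + B.rank := by
  rw [rank, rank, rank, mulVecLin_add]
  exact (Submodule.finrank_mono (range_add_le _ _)).trans
    (Submodule.finrank_add_le_finrank_add_finrank _ _)

theorem rank_eq_zero_iff {m n : Type*} [Fintype n] {A : Matrix m n K} :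
    A.rank = 0 ↔ A = 0 := by
  classical
  rw [rank, Submodule.finrank_eq_zero, range_eq_bot, ← toLin'_apply',
    map_eq_zero_iff _ toLin'.injective]

theorem rank_vecMulVec_eq_one {m n : Type*} [Fintype n] {w : m → K} {u : n → K} (hw : w ≠ 0)
    (hu : u ≠ 0) : (vecMulVec w u).rank = 1 :=
  (rank_vecMulVec_le w u).antisymm <| Nat.one_le_iff_ne_zero.mpr <| by
    obtain ⟨i, hi⟩ := Function.ne_iff.mp hw
    obtain ⟨j, hj⟩ := Function.ne_iff.mp hu
    rw [Ne, rank_eq_zero_iff]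
    exact fun h => mul_ne_zero hi hj (congrFun₂ h i j)

variable {ι : Type*} [Fintype ι] [DecidableEq ι]

theorem rank_mul_sub_one_le (A B : Matrix ι ι K) :
    (A * B - 1).rank ≤ (A - 1).rank + (B - 1).rank :=
  calc (A * B - 1).rank = (A * (B - 1) + (A - 1)).rank := by
        rw [mul_sub, mul_one, sub_add_sub_cancel]
    _ ≤ (A * (B - 1)).rank + (A - 1).rank := rank_add_le _ _
    _ ≤ (B - 1).rank + (A - 1).rank := by grw [rank_mul_le_right]
    _ = (A - 1).rank + (B - 1).rank := add_comm _ _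

theorem det_one_add_vecMulVec (w u : ι → K) : (1 + vecMulVec w u).det = 1 + u ⬝ᵥ w := by
  rw [vecMulVec_eq Unit, det_one_add_replicateCol_mul_replicateRow]

theorem rank_sub_one_add_finrank_fixedSubmodule (A : Matrix ι ι K) :
    (A - 1).rank + finrank K A.mulVecLin.fixedSubmodule = Fintype.card ι := by
  have : A.mulVecLin.fixedSubmodule = ker (A - 1).mulVecLin := by
    ext x
    simp [sub_eq_zero]
  rw [rank, this, finrank_range_add_finrank_ker, finrank_fintype_fun_eq_card]

theorem rank_sub_one_lt_of_fixedSubmodule_lt {A B : Matrix ι ι K}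
    (h : A.mulVecLin.fixedSubmodule < B.mulVecLin.fixedSubmodule) :
    (B - 1).rank < (A - 1).rank := by
  have := Submodule.finrank_lt_finrank_of_lt h
  have := rank_sub_one_add_finrank_fixedSubmodule A
  have := rank_sub_one_add_finrank_fixedSubmodule B
  omega

theorem exists_rank_sub_one_eq_one_fixedSubmodule_lt {G : Matrix ι ι K} (hG : IsUnit G)
    (hG1 : G ≠ 1) :
    ∃ S : Matrix ι ι K, S.det ≠ 0 ∧ (S - 1).rank = 1 ∧
      G.mulVecLin.fixedSubmodule < (S * G).mulVecLin.fixedSubmodule := by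
  set W := G.mulVecLin.fixedSubmodule
  have memW (x : ι → K) : x ∈ W ↔ G *ᵥ x = x := mem_fixedSubmodule_iff
  obtain ⟨v, hv⟩ : ∃ v, G *ᵥ v ≠ v := by
    by_contra! h
    exact hG1 (ext_iff_mulVec.mpr fun v => by rw [h v, one_mulVec])
  have hvW : v ∉ W := (memW v).not.mpr hv
  have hGvW : G *ᵥ v ∉ W := fun h => hv (mulVec_injective_of_isUnit hG ((memW _).mp h))
  obtain ⟨u, huW, huGv, huv⟩ := W.exists_dotProduct_eq_one_ne_zero_of_notMem hGvW hvW
  -- `S` fixes `W` pointwise, as `u` vanishes on it, and sends `G v` back to `v`.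
  set S := 1 + vecMulVec (v - G *ᵥ v) u
  have memSG (x : ι → K) :
      x ∈ (S * G).mulVecLin.fixedSubmodule ↔ G *ᵥ x + (u ⬝ᵥ G *ᵥ x) • (v - G *ᵥ v) = x := by
    rw [mem_fixedSubmodule_iff, mulVecLin_apply, ← mulVec_mulVec, add_mulVec, one_mulVec,
      vecMulVec_mulVec, op_smul_eq_smul]
  refine ⟨S, ?_, ?_, SetLike.lt_iff_le_and_exists.mpr ⟨fun x hx => ?_, v, ?_, hvW⟩⟩
  · rwa [det_one_add_vecMulVec, dotProduct_sub, huGv, add_sub_cancel]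
  · rw [add_sub_cancel_left]
    refine rank_vecMulVec_eq_one (sub_ne_zero.mpr hv.symm) ?_
    rintro rfl
    simp at huGv
  · rw [memSG, (memW x).mp hx, huW x hx, zero_smul, add_zero]
  · rw [memSG, huGv, one_smul, add_sub_cancel]

end Matrix

section Reflection

variable {K : Type*} [Field K] {n : ℕ}

theorem IsReflection.inv {s : GL (Fin n) K} (hs : IsReflection s) : IsReflection s⁻¹ := by
  have h : ((s⁻¹ : GL (Fin n) K) : Matrix (Fin n) (Fin n) K) - 1 =
      ((-s⁻¹ : GL (Fin n) K) : Matrix (Fin n) (Fin n) K) *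
        ((s : Matrix (Fin n) (Fin n) K) - 1) := by
    rw [Units.val_neg, neg_mul, mul_sub, mul_one, ← Units.val_mul, inv_mul_cancel, Units.val_one,
      neg_sub]
  rw [IsReflection, h,
    rank_mul_eq_right_of_isUnit_det _ _ ((Matrix.isUnit_iff_isUnit_det _).mp (Units.isUnit _))]
  exact hs

theorem rank_prod_sub_one_le_length (l : List (GL (Fin n) K)) (hl : ∀ s ∈ l, IsReflection s) :
    ((l.prod : Matrix (Fin n) (Fin n) K) - 1).rank ≤ l.length := by
  induction l with
  | nil => simp
  | cons s l ih =>
    obtain ⟨hs, hl⟩ := List.forall_mem_cons.mp hl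
    rw [IsReflection] at hs
    rw [List.prod_cons, Units.val_mul, List.length_cons]
    grw [rank_mul_sub_one_le, hs, ih hl]
    omega

theorem exists_isReflection_rank_mul_sub_one_lt {g : GL (Fin n) K} (hg : g ≠ 1) :
    ∃ s : GL (Fin n) K, IsReflection s ∧
      (((s * g : GL (Fin n) K) : Matrix (Fin n) (Fin n) K) - 1).rank <
        ((g : Matrix (Fin n) (Fin n) K) - 1).rank := by
  obtain ⟨S, hdet, hrank, hlt⟩ :=
    exists_rank_sub_one_eq_one_fixedSubmodule_lt g.isUnit (Units.val_eq_one.not.mpr hg)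
  exact ⟨GeneralLinearGroup.mkOfDetNeZero S hdet, hrank, rank_sub_one_lt_of_fixedSubmodule_lt hlt⟩

theorem exists_isReflection_prod_eq (g : GL (Fin n) K) :
    ∃ l : List (GL (Fin n) K), l.length ≤ ((g : Matrix (Fin n) (Fin n) K) - 1).rank ∧
      (∀ s ∈ l, IsReflection s) ∧ l.prod = g := by
  by_cases hg : g = 1
  · exact ⟨[], Nat.zero_le _, List.forall_mem_nil _, hg.symm⟩
  obtain ⟨s, hs, hlt⟩ := exists_isReflection_rank_mul_sub_one_lt hg
  obtain ⟨l, hlen, hl, hprod⟩ := exists_isReflection_prod_eq (s * g)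
  refine ⟨s⁻¹ :: l, by rw [List.length_cons]; omega, List.forall_mem_cons.mpr ⟨hs.inv, hl⟩, ?_⟩
  rw [List.prod_cons, hprod, inv_mul_cancel_left]
termination_by ((g : Matrix (Fin n) (Fin n) K) - 1).rank

end Reflection

/-- The reflection length of `g ∈ GL_n(𝔽_q)` equals the rank of `g - 1`,
i.e. the codimension of the fixed point subspace of `g`. -/
theorem reflLength_eq_rank {n : ℕ} (g : GL (Fin n) F) :
    reflLength g = ((g : Matrix (Fin n) (Fin n) F) - 1).rank := by
  obtain ⟨l, hlen, hl, hprod⟩ := exists_isReflection_prod_eq g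
  have hmem : l.length ∈ {k | ∃ l : List (GL (Fin n) F),
      l.length = k ∧ (∀ s ∈ l, IsReflection s) ∧ l.prod = g} := ⟨l, rfl, hl, hprod⟩
  refine le_antisymm ((Nat.sInf_le hmem).trans hlen) ?_
  obtain ⟨l', hlen', hl', hprod'⟩ := Nat.sInf_mem ⟨_, hmem⟩
  rw [reflLength, ← hlen', ← hprod']
  exact rank_prod_sub_one_le_length l' hl'
end

section
/- Let k ≤ n and let ḡ ∈ GL_k(𝔽_q) satisfy ker(ḡ − 1) ⊆ im(ḡ − 1) (equivalently, every Jordan block of ḡ with eigenvalue 1 has size at least 2). Let g = ḡ ⊕ I_{n−k} ∈ GL_n(𝔽_q). Then the centralizer of g in GL_n(𝔽_q) consists exactly of the block matrices [[A, B], [C, D]] (with A of size k×k, B of size k×(n−k), C of size (n−k)×k, D of size (n−k)×(n−k)) such that A ∈ GL_k(𝔽_q) with Aḡ = ḡA, D ∈ GL_{n−k}(𝔽_q), ḡB = B, and Cḡ = C. -/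
open Matrix

variable {F : Type*} [Field F] [Fintype F] [DecidableEq F]

/-- The `(k+m) × (k+m)` block matrix `[[A, B], [C, D]]`. -/
def blockMat {k m : ℕ} (A : Matrix (Fin k) (Fin k) F) (B : Matrix (Fin k) (Fin m) F)
    (C : Matrix (Fin m) (Fin k) F) (D : Matrix (Fin m) (Fin m) F) :
    Matrix (Fin (k + m)) (Fin (k + m)) F :=
  Matrix.reindex finSumFinEquiv finSumFinEquiv (Matrix.fromBlocks A B C D)

/-! The block conditions are exactly what `M * g = g * M` says blockwise, so the work is to show
that the diagonal blocks `A`, `D` of an invertible `M` in the centralizer are invertible. The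
inverse `M⁻¹ = [[A', B'], [C', D']]` lies in the centralizer too. The columns of `B`, `B'` lie
in `ker (ḡ - 1) ⊆ im (ḡ - 1)`, which `C`, `C'` annihilate, so `C * B' = 0` and `C' * B = 0`.
Hence the diagonal blocks of `M * M⁻¹ = 1` read `D * D' = 1` and `A * A' = 1 - B * C'`, where
`(B * C')² = B * (C' * B) * C' = 0`. -/

section

variable {R : Type*} {k m : ℕ}

lemma blockMat_mul [Semiring R] (A A' : Matrix (Fin k) (Fin k) R) (B B' : Matrix (Fin k) (Fin m) R)
    (C C' : Matrix (Fin m) (Fin k) R) (D D' : Matrix (Fin m) (Fin m) R) :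
    blockMat A B C D * blockMat A' B' C' D' =
      blockMat (A * A' + B * C') (A * B' + B * D') (C * A' + D * C') (C * B' + D * D') := by
  simp only [blockMat, reindex_apply, submatrix_mul_equiv, fromBlocks_multiply]

lemma blockMat_one [Semiring R] :
    (blockMat 1 0 0 1 : Matrix (Fin (k + m)) (Fin (k + m)) R) = 1 := by
  simp only [blockMat, fromBlocks_one, reindex_apply, submatrix_one_equiv]

lemma blockMat_inj {A A' : Matrix (Fin k) (Fin k) R} {B B' : Matrix (Fin k) (Fin m) R}
    {C C' : Matrix (Fin m) (Fin k) R} {D D' : Matrix (Fin m) (Fin m) R} :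
    blockMat A B C D = blockMat A' B' C' D' ↔ A = A' ∧ B = B' ∧ C = C' ∧ D = D' := by
  rw [blockMat, blockMat, (reindex _ _).injective.eq_iff, fromBlocks_inj]

lemma exists_eq_blockMat (M : Matrix (Fin (k + m)) (Fin (k + m)) R) :
    ∃ A B C D, M = blockMat A B C D := by
  let N := reindex finSumFinEquiv.symm finSumFinEquiv.symm M
  refine ⟨N.toBlocks₁₁, N.toBlocks₁₂, N.toBlocks₂₁, N.toBlocks₂₂, ?_⟩
  rw [blockMat, fromBlocks_toBlocks]
  exact ((reindex finSumFinEquiv finSumFinEquiv).apply_symm_apply M).symm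

lemma blockMat_commute_diag_one_iff [Semiring R] (g A : Matrix (Fin k) (Fin k) R)
    (B : Matrix (Fin k) (Fin m) R) (C : Matrix (Fin m) (Fin k) R) (D : Matrix (Fin m) (Fin m) R) :
    Commute (blockMat A B C D) (blockMat g 0 0 1) ↔
      A * g = g * A ∧ g * B = B ∧ C * g = C := by
  simp only [Commute, SemiconjBy, blockMat_mul, Matrix.mul_zero, Matrix.zero_mul, Matrix.mul_one,
    Matrix.one_mul, add_zero, zero_add, blockMat_inj, and_true]
  tauto

end

section

variable {R : Type*} [CommRing R] {n p q : Type*} [Fintype n] [DecidableEq n] [Fintype p]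
  [DecidableEq p]

lemma mul_eq_zero_of_ker_le_range {T : Matrix n n R}
    (hT : LinearMap.ker (toLin' T) ≤ LinearMap.range (toLin' T))
    {Y : Matrix n p R} {Z : Matrix q n R} (hY : T * Y = 0) (hZ : Z * T = 0) : Z * Y = 0 := by
  have hYT : LinearMap.range (toLin' Y) ≤ LinearMap.ker (toLin' T) := by
    rw [LinearMap.range_le_ker_iff, ← toLin'_mul, hY, map_zero]
  have hTZ : LinearMap.range (toLin' T) ≤ LinearMap.ker (toLin' Z) := by
    rw [LinearMap.range_le_ker_iff, ← toLin'_mul, hZ, map_zero]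
  apply toLin'.injective
  rw [toLin'_mul, map_zero, ← LinearMap.range_le_ker_iff]
  exact hYT.trans (hT.trans hTZ)

lemma isUnit_of_mul_add_eq_one {A A' N : Matrix n n R} (h : A * A' + N = 1)
    (hN : IsNilpotent N) : IsUnit A :=
  isUnit_of_mul_isUnit_left (eq_sub_of_add_eq h ▸ hN.isUnit_one_sub)

end

/-- Let `ḡ ∈ GL_k(𝔽_q)` with `ker(ḡ - 1) ⊆ im(ḡ - 1)`, and `g = ḡ ⊕ I_{n-k}`.
The centralizer of `g` in `GL_n(𝔽_q)` consists exactly of the invertible block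
matrices `[[A, B], [C, D]]` with `A` invertible commuting with `ḡ`, `D`
invertible, `ḡB = B`, and `Cḡ = C`. -/
theorem centralizer_block_description {k m : ℕ} (g0 : GL (Fin k) F)
    (hg : LinearMap.ker (Matrix.toLin' ((g0 : Matrix (Fin k) (Fin k) F) - 1)) ≤
      LinearMap.range (Matrix.toLin' ((g0 : Matrix (Fin k) (Fin k) F) - 1)))
    (M : GL (Fin (k + m)) F) :
    ((M : Matrix (Fin (k + m)) (Fin (k + m)) F) *
        blockMat (g0 : Matrix (Fin k) (Fin k) F) 0 0 1 =
      blockMat (g0 : Matrix (Fin k) (Fin k) F) 0 0 1 *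
        (M : Matrix (Fin (k + m)) (Fin (k + m)) F)) ↔
    ∃ (A : GL (Fin k) F) (D : GL (Fin m) F) (B : Matrix (Fin k) (Fin m) F)
        (C : Matrix (Fin m) (Fin k) F),
      (M : Matrix (Fin (k + m)) (Fin (k + m)) F) =
        blockMat (A : Matrix (Fin k) (Fin k) F) B C (D : Matrix (Fin m) (Fin m) F) ∧
      (A : Matrix (Fin k) (Fin k) F) * (g0 : Matrix (Fin k) (Fin k) F) =
        (g0 : Matrix (Fin k) (Fin k) F) * (A : Matrix (Fin k) (Fin k) F) ∧
      (g0 : Matrix (Fin k) (Fin k) F) * B = B ∧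
      C * (g0 : Matrix (Fin k) (Fin k) F) = C := by
  set g : Matrix (Fin k) (Fin k) F := (g0 : Matrix (Fin k) (Fin k) F)
  have annihilate {Y : Matrix (Fin k) (Fin m) F} {Z : Matrix (Fin m) (Fin k) F} (hY : g * Y = Y)
      (hZ : Z * g = Z) : Z * Y = 0 :=
    mul_eq_zero_of_ker_le_range hg (by rw [Matrix.sub_mul, Matrix.one_mul, hY, sub_self])
      (by rw [Matrix.mul_sub, Matrix.mul_one, hZ, sub_self])
  change Commute _ _ ↔ _
  constructor
  · intro hM
    obtain ⟨A, B, C, D, hABCD⟩ := exists_eq_blockMat (M : Matrix (Fin (k + m)) (Fin (k + m)) F)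
    obtain ⟨A', B', C', D', hABCD'⟩ :=
      exists_eq_blockMat ((M⁻¹ : GL (Fin (k + m)) F) : Matrix (Fin (k + m)) (Fin (k + m)) F)
    obtain ⟨hA, hB, hC⟩ := (blockMat_commute_diag_one_iff g A B C D).1 (hABCD ▸ hM)
    obtain ⟨-, hB', hC'⟩ :=
      (blockMat_commute_diag_one_iff g A' B' C' D').1 (hABCD' ▸ hM.units_inv_left)
    have hMM' : blockMat A B C D * blockMat A' B' C' D' = blockMat 1 0 0 1 := by
      rw [← hABCD, ← hABCD', blockMat_one, ← Units.val_mul, mul_inv_cancel, Units.val_one]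
    obtain ⟨hAA', -, -, hDD'⟩ := blockMat_inj.1 ((blockMat_mul ..).symm.trans hMM')
    have hA_unit : IsUnit A := isUnit_of_mul_add_eq_one hAA' ⟨2, by
      rw [pow_two, Matrix.mul_assoc, ← Matrix.mul_assoc C', annihilate hB hC', Matrix.zero_mul,
        Matrix.mul_zero]⟩
    have hD_unit : IsUnit D := isUnit_of_mul_add_eq_one ((add_comm ..).trans hDD')
      (annihilate hB' hC ▸ IsNilpotent.zero)
    exact ⟨hA_unit.unit, hD_unit.unit, B, C, hABCD, hA, hB, hC⟩
  · rintro ⟨A, D, B, C, hM, hblocks⟩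
    rw [hM]
    exact (blockMat_commute_diag_one_iff ..).2 hblocks
end

section
/- Let k ≤ n and let ḡ ∈ GL_k(𝔽_q) satisfy ker(ḡ − 1) ⊆ im(ḡ − 1) (equivalently, every Jordan block of ḡ with eigenvalue 1 has size at least 2). Let g = ḡ ⊕ I_{n−k} ∈ GL_n(𝔽_q). If an n×n matrix M = [[A, B], [C, D]] over 𝔽_q (blocks of sizes k×k, k×(n−k), (n−k)×k, (n−k)×(n−k)) commutes with g, then M is invertible if and only if both A and D are invertible. -/
/-!
Write `P = ḡ - 1` and `G = ḡ ⊕ I`. A block matrix `M = [[A, B], [C, D]]` commutes with `G`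
exactly when `A` commutes with `ḡ`, `P B = 0` and `C P = 0`. Then the columns of `B` lie in
`ker P ⊆ im P`, which `C` annihilates, so `C B = 0`; the same holds for `X B` whenever `X`
commutes with `ḡ`. If `A` is invertible, `C A⁻¹ B = 0` and the Schur complement formula gives
`det M = det A * det D`. Conversely, if `M` is invertible then so is `M⁻¹ = [[A', B'], [C', D']]`
in the commutant of `G`, hence `C B' = 0 = C' B`, and the diagonal blocks of `M M⁻¹ = 1` read
`D D' = 1` and `A A' = 1 - B C'` with `(B C')² = 0`.
-/

open Matrix

variable {F : Type*} [Field F] [Fintype F] [DecidableEq F]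

namespace Matrix

variable {R : Type*} [CommRing R] {n m l : Type*} [Fintype n] [DecidableEq n] [Fintype m]
  [DecidableEq m]

theorem mul_eq_zero_of_ker_le_range {P : Matrix n n R}
    (hP : LinearMap.ker (toLin' P) ≤ LinearMap.range (toLin' P))
    {B : Matrix n m R} {C : Matrix l n R} (hB : P * B = 0) (hC : C * P = 0) : C * B = 0 := by
  have hBP : LinearMap.range (toLin' B) ≤ LinearMap.ker (toLin' P) :=
    LinearMap.range_le_ker_iff.2 (by rw [← toLin'_mul, hB, map_zero])
  have hPC : LinearMap.range (toLin' P) ≤ LinearMap.ker (toLin' C) :=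
    LinearMap.range_le_ker_iff.2 (by rw [← toLin'_mul, hC, map_zero])
  apply toLin'.injective
  rw [toLin'_mul, map_zero, ← LinearMap.range_le_ker_iff]
  exact hBP.trans (hP.trans hPC)

variable {G : Matrix n n R} {A : Matrix n n R} {B : Matrix n m R} {C : Matrix m n R}
  {D : Matrix m m R}

theorem commute_fromBlocks_one_iff :
    Commute (fromBlocks A B C D) (fromBlocks G 0 0 1) ↔
      Commute A G ∧ (G - 1) * B = 0 ∧ C * (G - 1) = 0 := by
  simp only [Commute, SemiconjBy, fromBlocks_multiply, fromBlocks_inj, Matrix.sub_mul,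
    Matrix.mul_sub, Matrix.one_mul, Matrix.mul_one, sub_eq_zero]
  simp [eq_comm]

variable (hG : LinearMap.ker (toLin' (G - 1)) ≤ LinearMap.range (toLin' (G - 1)))
include hG

theorem det_fromBlocks_of_commute (hM : Commute (fromBlocks A B C D) (fromBlocks G 0 0 1))
    (hA : IsUnit A) : det (fromBlocks A B C D) = det A * det D := by
  obtain ⟨hAG, hB, hC⟩ := commute_fromBlocks_one_iff.1 hM
  have := hA.invertible
  have hAB : (G - 1) * (⅟A * B) = 0 := by
    rw [← Matrix.mul_assoc, ← ((hAG.sub_right (Commute.one_right A)).invOf_left).eq,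
      Matrix.mul_assoc, hB, Matrix.mul_zero]
  rw [det_fromBlocks₁₁, Matrix.mul_assoc, mul_eq_zero_of_ker_le_range hG hAB hC, sub_zero]

theorem isUnit_and_isUnit_of_isUnit_fromBlocks
    (hM : Commute (fromBlocks A B C D) (fromBlocks G 0 0 1))
    (hMu : IsUnit (fromBlocks A B C D)) : IsUnit A ∧ IsUnit D := by
  obtain ⟨u, hu⟩ := hMu
  obtain ⟨A', B', C', D', hN⟩ : ∃ A' B' C' D', (↑u⁻¹ : Matrix (n ⊕ m) (n ⊕ m) R) =
      fromBlocks A' B' C' D' := ⟨_, _, _, _, (fromBlocks_toBlocks _).symm⟩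
  have hN' : Commute (fromBlocks A' B' C' D') (fromBlocks G 0 0 1) :=
    hN ▸ (hu ▸ hM).units_inv_left
  obtain ⟨-, hB, hC⟩ := commute_fromBlocks_one_iff.1 hM
  obtain ⟨-, hB', hC'⟩ := commute_fromBlocks_one_iff.1 hN'
  have hMN : fromBlocks (A * A' + B * C') (A * B' + B * D') (C * A' + D * C')
      (C * B' + D * D') = fromBlocks 1 0 0 1 := by
    rw [← fromBlocks_multiply, ← hN, ← hu, fromBlocks_one, u.mul_inv]
  have hCB' : C * B' = 0 := mul_eq_zero_of_ker_le_range hG hB' hC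
  have hC'B : C' * B = 0 := mul_eq_zero_of_ker_le_range hG hB hC'
  obtain ⟨hAA', -, -, hDD'⟩ := fromBlocks_inj.1 hMN
  rw [hCB', zero_add] at hDD'
  have hBC' : IsNilpotent (B * C') :=
    ⟨2, by rw [pow_two, Matrix.mul_assoc, ← Matrix.mul_assoc C', hC'B, Matrix.zero_mul,
      Matrix.mul_zero]⟩
  have hAA'_unit : IsUnit (A * A') := eq_sub_of_add_eq hAA' ▸ hBC'.isUnit_one_sub
  exact ⟨isUnit_of_mul_isUnit_left hAA'_unit, .of_mul_eq_one D' hDD'⟩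

theorem isUnit_fromBlocks_iff_of_commute
    (hM : Commute (fromBlocks A B C D) (fromBlocks G 0 0 1)) :
    IsUnit (fromBlocks A B C D) ↔ IsUnit A ∧ IsUnit D := by
  refine ⟨isUnit_and_isUnit_of_isUnit_fromBlocks hG hM, fun ⟨hA, hD⟩ => ?_⟩
  rw [isUnit_iff_isUnit_det, det_fromBlocks_of_commute hG hM hA]
  exact (isUnit_iff_isUnit_det A).1 hA |>.mul <| (isUnit_iff_isUnit_det D).1 hD

end Matrix

set_option linter.unusedSectionVars false in
/-- Let `ḡ ∈ GL_k(𝔽_q)` with `ker(ḡ - 1) ⊆ im(ḡ - 1)`, and `g = ḡ ⊕ I_{n-k}`.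
If a block matrix `M = [[A, B], [C, D]]` commutes with `g`, then `M` is
invertible if and only if both `A` and `D` are invertible. -/
theorem block_invertible_iff {k m : ℕ} (g0 : GL (Fin k) F)
    (hg : LinearMap.ker (Matrix.toLin' ((g0 : Matrix (Fin k) (Fin k) F) - 1)) ≤
      LinearMap.range (Matrix.toLin' ((g0 : Matrix (Fin k) (Fin k) F) - 1)))
    (A : Matrix (Fin k) (Fin k) F) (B : Matrix (Fin k) (Fin m) F)
    (C : Matrix (Fin m) (Fin k) F) (D : Matrix (Fin m) (Fin m) F)
    (hcomm : blockMat A B C D * blockMat (g0 : Matrix (Fin k) (Fin k) F) 0 0 1 =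
      blockMat (g0 : Matrix (Fin k) (Fin k) F) 0 0 1 * blockMat A B C D) :
    IsUnit (blockMat A B C D) ↔ IsUnit A ∧ IsUnit D := by
  let e := reindexAlgEquiv F F (finSumFinEquiv (m := k) (n := m))
  have hblock (A' : Matrix (Fin k) (Fin k) F) (B' : Matrix (Fin k) (Fin m) F)
      (C' : Matrix (Fin m) (Fin k) F) (D' : Matrix (Fin m) (Fin m) F) :
      blockMat A' B' C' D' = e (fromBlocks A' B' C' D') := rfl
  rw [hblock, hblock, ← map_mul, ← map_mul] at hcomm
  rw [hblock, MulEquiv.isUnit_map]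
  exact isUnit_fromBlocks_iff_of_commute hg (e.injective hcomm)
end

section
/- Let ξ, η ∈ 𝔽_q \ {0} and ξ′, η′ ∈ 𝔽_q \ {0, 1}. Let N be the number of ordered pairs (g, h) ∈ GL_2(𝔽_q) × GL_2(𝔽_q) with g conjugate to r(ξ), h conjugate to r(η), and g·h = diag(ξ′, η′). Then: N = q² + q if ξ = η = ξ′ = η′; N = 2q − 1 if ξ′ ≠ η′ and {ξ′, η′} = {ξ, η}; N = q − 1 if ξ′η′ = ξη, ξ′ ≠ η′ and {ξ′, η′} ≠ {ξ, η}; and N = 0 in all other cases (in particular whenever ξ′η′ ≠ ξη). -/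
/-!
A non-scalar `2 × 2` matrix is conjugate to the companion matrix of its characteristic
polynomial, so `g ∼ r(ξ)` iff `tr g = ξ + 1`, `det g = ξ` and `g ≠ 1`. Writing `h = g⁻¹ D` with
`D = diag(ξ', η')`, the conditions on `h` become `ξ'η' = ξη` and one linear equation
`(a - 1)(η' - ξ') = (ξ' - 1)(η' - ξ)` in the top-left entry `a` of `g`; the conditions `g ≠ 1`,
`h ≠ 1` are automatic because `D` has no eigenvalue `1`. Once `a` is fixed, the off-diagonal
entries `b, c` of `g` only have to satisfy `bc = (a - 1)(ξ - a)`, which has `2q - 1` solutions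
if the right side vanishes and `q - 1` otherwise. For `ξ' ≠ η'` the linear equation pins down `a`,
and `(a - 1)(ξ - a) = 0` exactly when `{ξ', η'} = {ξ, η}`; for `ξ' = η'` it forces
`ξ' = ξ = η` and leaves `a` free, giving `2(2q - 1) + (q - 2)(q - 1) = q² + q`.
-/

open Matrix

variable {F : Type*} [Field F] [Fintype F] [DecidableEq F]

/-- The representative reflection of modified type `(1)_{t-ξ}`:
`diag(ξ, 1)` if `ξ ≠ 1`, and the transvection `[[1,1],[0,1]]` if `ξ = 1`. -/
def refl2 (ξ : F) : Matrix (Fin 2) (Fin 2) F :=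
  if ξ = 1 then !![1, 1; 0, 1] else !![ξ, 0; 0, 1]

theorem Nat.card_setOf_mul_eq {G : Type*} [Group G] (P Q : G → Prop) (d : G) :
    Nat.card {gh : G × G | P gh.1 ∧ Q gh.2 ∧ gh.1 * gh.2 = d} =
      Nat.card {g : G | P g ∧ Q (g⁻¹ * d)} :=
  Nat.card_congr
    { toFun := fun gh => ⟨gh.1.1, gh.2.1, by
        obtain ⟨⟨g, h⟩, -, hh, rfl⟩ := gh
        simpa using hh⟩
      invFun := fun g => ⟨(g.1, g.1⁻¹ * d), g.2.1, g.2.2, mul_inv_cancel_left _ _⟩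
      left_inv := by
        rintro ⟨⟨g, h⟩, -, -, rfl⟩
        simp
      right_inv := fun _ => rfl }

theorem Units.card_subtype_val_eq {M : Type*} [Monoid M] (p : M → Prop)
    (hp : ∀ m, p m → IsUnit m) :
    Nat.card {u : Mˣ // p u} = Nat.card {m : M // p m} :=
  Nat.card_congr
    { toFun := fun u => ⟨u.1, u.2⟩
      invFun := fun m => ⟨(hp m.1 m.2).unit, by simpa using m.2⟩
      left_inv := fun _ => by ext; simp
      right_inv := fun _ => by ext; simp }

theorem Units.exists_conj_eq_iff_isConj {M : Type*} [Monoid M] (g : Mˣ) (a : M) :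
    (∃ z : Mˣ, ((z * g * z⁻¹ : Mˣ) : M) = a) ↔ IsConj (g : M) a := by
  simp only [IsConj, SemiconjBy, Units.val_mul, Units.mul_inv_eq_iff_eq_mul]

theorem IsConj.trace_eq {n R : Type*} [Fintype n] [DecidableEq n] [CommRing R]
    {a b : Matrix n n R} (h : IsConj a b) : a.trace = b.trace := by
  obtain ⟨c, hc⟩ := h
  rw [← trace_units_conj c a, SemiconjBy.eq hc, Units.mul_inv_cancel_right]

theorem IsConj.det_eq {n R : Type*} [Fintype n] [DecidableEq n] [CommRing R]
    {a b : Matrix n n R} (h : IsConj a b) : a.det = b.det := by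
  obtain ⟨c, hc⟩ := h
  rw [← det_units_conj c a, SemiconjBy.eq hc, Units.mul_inv_cancel_right]

theorem Finset.pair_eq_pair_iff {α : Type*} [DecidableEq α] {a b c d : α} :
    ({a, b} : Finset α) = {c, d} ↔ a = c ∧ b = d ∨ a = d ∧ b = c := by
  rw [← coe_inj, coe_pair, coe_pair, Set.pair_eq_pair_iff]

section FinTwo

variable {K : Type*} [Field K]

/-- Cayley–Hamilton, written in the basis `v, m v` with `v = (x, y)`. -/
theorem mul_cyclic_eq_cyclic_mul_companion (m : Matrix (Fin 2) (Fin 2) K) (x y : K) :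
    m * !![x, m 0 0 * x + m 0 1 * y; y, m 1 0 * x + m 1 1 * y] =
      !![x, m 0 0 * x + m 0 1 * y; y, m 1 0 * x + m 1 1 * y] * !![0, -m.det; 1, m.trace] := by
  ext i j
  fin_cases i <;> fin_cases j <;> simp [mul_apply, det_fin_two, trace_fin_two] <;> ring

theorem exists_det_cyclic_ne_zero {m : Matrix (Fin 2) (Fin 2) K} (hm : ∀ c : K, m ≠ c • 1) :
    ∃ x y : K, (!![x, m 0 0 * x + m 0 1 * y; y, m 1 0 * x + m 1 1 * y]).det ≠ 0 := by
  by_contra! h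
  have h₁₀ : m 1 0 = 0 := by simpa [det_fin_two_of] using h 1 0
  have h₀₁ : m 0 1 = 0 := by simpa [det_fin_two_of] using h 0 1
  have h₁₁ : m 1 1 = m 0 0 := by
    have := h 1 1
    rw [det_fin_two_of] at this
    linear_combination this - h₁₀ + h₀₁
  apply hm (m 0 0)
  ext i j
  fin_cases i <;> fin_cases j <;> simp [h₁₀, h₀₁, h₁₁]

theorem isConj_companion_of_ne_smul_one {m : Matrix (Fin 2) (Fin 2) K}
    (hm : ∀ c : K, m ≠ c • 1) : IsConj !![0, -m.det; 1, m.trace] m := by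
  obtain ⟨x, y, hxy⟩ := exists_det_cyclic_ne_zero hm
  have hP := (isUnit_iff_isUnit_det _).2 hxy.isUnit
  exact ⟨hP.unit, (mul_cyclic_eq_cyclic_mul_companion m x y).symm⟩

theorem isConj_iff_of_ne_smul_one {m n : Matrix (Fin 2) (Fin 2) K}
    (hm : ∀ c : K, m ≠ c • 1) (hn : ∀ c : K, n ≠ c • 1) :
    IsConj m n ↔ m.trace = n.trace ∧ m.det = n.det := by
  refine ⟨fun h => ⟨h.trace_eq, h.det_eq⟩, fun ⟨ht, hd⟩ => ?_⟩
  have hcm := isConj_companion_of_ne_smul_one hm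
  rw [ht, hd] at hcm
  exact hcm.symm.trans (isConj_companion_of_ne_smul_one hn)

theorem trace_refl2 [DecidableEq K] (ζ : K) : (refl2 ζ).trace = ζ + 1 := by
  unfold refl2; split_ifs with h <;> simp [trace_fin_two, h]

theorem det_refl2 [DecidableEq K] (ζ : K) : (refl2 ζ).det = ζ := by
  unfold refl2; split_ifs with h <;> simp [det_fin_two, h]

theorem refl2_ne_smul_one [DecidableEq K] (ζ c : K) : refl2 ζ ≠ c • 1 := by
  intro h
  have h₀₀ := congrFun₂ h 0 0
  have h₀₁ := congrFun₂ h 0 1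
  have h₁₁ := congrFun₂ h 1 1
  unfold refl2 at h₀₀ h₀₁ h₁₁
  split_ifs at h₀₀ h₀₁ h₁₁ with hζ <;> simp_all

theorem isConj_refl2_iff [DecidableEq K] (ζ : K) (m : Matrix (Fin 2) (Fin 2) K) :
    IsConj m (refl2 ζ) ↔ m.trace = ζ + 1 ∧ m.det = ζ ∧ m ≠ 1 := by
  constructor
  · intro h
    refine ⟨h.trace_eq.trans (trace_refl2 ζ), h.det_eq.trans (det_refl2 ζ), ?_⟩
    rintro rfl
    exact refl2_ne_smul_one ζ 1 (by rw [one_smul]; exact isConj_one_right.1 h)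
  · rintro ⟨ht, hd, h1⟩
    have hm : ∀ c : K, m ≠ c • 1 := by
      rintro c rfl
      simp only [trace_smul, trace_one, det_smul, det_one, Fintype.card_fin, smul_eq_mul] at ht hd
      have hc : (c - 1) ^ 2 = 0 := by linear_combination hd - ht
      exact h1 (by rw [sub_eq_zero.1 (pow_eq_zero_iff two_ne_zero |>.1 hc), one_smul])
    rw [isConj_iff_of_ne_smul_one hm (refl2_ne_smul_one ζ), trace_refl2, det_refl2]
    exact ⟨ht, hd⟩

theorem trace_inv_mul_diag (m : Matrix (Fin 2) (Fin 2) K) (x y : K) :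
    (m⁻¹ * !![x, 0; 0, y]).trace = m.det⁻¹ * (m 1 1 * x + m 0 0 * y) := by
  rw [inv_def, Ring.inverse_eq_inv', adjugate_fin_two, smul_mul, trace_smul, smul_eq_mul]
  simp [trace_fin_two]

theorem det_inv_mul_diag (m : Matrix (Fin 2) (Fin 2) K) (x y : K) :
    (m⁻¹ * !![x, 0; 0, y]).det = m.det⁻¹ * (x * y) := by
  rw [det_mul, det_nonsing_inv, Ring.inverse_eq_inv', det_fin_two_of, mul_zero, sub_zero]

theorem not_trace_det_diag_eq {x y : K} (hx : x ≠ 1) (hy : y ≠ 1) (ζ : K) :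
    ¬((!![x, 0; 0, y] : Matrix (Fin 2) (Fin 2) K).trace = ζ + 1 ∧ !![x, 0; 0, y].det = ζ) := by
  rintro ⟨ht, hd⟩
  rw [trace_fin_two_of] at ht
  rw [det_fin_two_of] at hd
  have : (x - 1) * (y - 1) = 0 := by linear_combination hd - ht
  rcases mul_eq_zero.1 this with h | h
  exacts [hx (sub_eq_zero.1 h), hy (sub_eq_zero.1 h)]

theorem isConj_refl2_and_inv_mul_diag_iff [DecidableEq K] {ξ η ξ' η' : K} (hξ : ξ ≠ 0)
    (hξ' : ξ' ≠ 1) (hη' : η' ≠ 1) (m : Matrix (Fin 2) (Fin 2) K) :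
    IsConj m (refl2 ξ) ∧ IsConj (m⁻¹ * !![ξ', 0; 0, η']) (refl2 η) ↔
      m.trace = ξ + 1 ∧ m.det = ξ ∧ ξ' * η' = ξ * η ∧
        (m 0 0 - 1) * (η' - ξ') = (ξ' - 1) * (η' - ξ) := by
  rw [isConj_refl2_iff, isConj_refl2_iff, trace_inv_mul_diag, det_inv_mul_diag]
  constructor
  · rintro ⟨⟨ht, hd, -⟩, ht', hd', -⟩
    rw [hd] at ht' hd'
    rw [trace_fin_two] at ht
    field_simp at ht' hd'
    exact ⟨by rwa [trace_fin_two], hd, by linear_combination hd',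
      by linear_combination ht' - ξ' * ht - hd'⟩
  · rintro ⟨ht, hd, hprod, hlin⟩
    have hm : IsUnit m.det := hd ▸ hξ.isUnit
    have ht' : m.det⁻¹ * (m 1 1 * ξ' + m 0 0 * η') = η + 1 := by
      rw [trace_fin_two] at ht
      rw [hd, inv_mul_eq_iff_eq_mul₀ hξ]
      linear_combination ξ' * ht + hlin + hprod
    have hd' : m.det⁻¹ * (ξ' * η') = η := by
      rw [hd, inv_mul_eq_iff_eq_mul₀ hξ, hprod]
    refine ⟨⟨ht, hd, ?_⟩, ht', hd', ?_⟩
    · rintro rfl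
      refine not_trace_det_diag_eq hξ' hη' η ⟨?_, ?_⟩
      · simpa [trace_fin_two] using ht'
      · simpa using hd'
    · intro h1
      have hmD : m = !![ξ', 0; 0, η'] := by
        rw [← mul_nonsing_inv_cancel_left (A := m) !![ξ', 0; 0, η'] hm, h1, mul_one]
      exact not_trace_det_diag_eq hξ' hη' ξ (hmD ▸ ⟨ht, hd⟩)

end FinTwo

section Counting

open Finset

variable {K : Type*} [Field K] [Fintype K]

theorem card_trace_det_fiber (t δ : K) (s : Finset K) :
    Nat.card {m : Matrix (Fin 2) (Fin 2) K // m.trace = t ∧ m.det = δ ∧ m 0 0 ∈ s} =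
      ∑ a ∈ s, Nat.card {p : K × K // p.1 * p.2 = a * (t - a) - δ} := by
  rw [← sum_coe_sort s, ← Nat.card_sigma]
  refine Nat.card_congr
    { toFun := fun m => ⟨⟨m.1 0 0, m.2.2.2⟩, (m.1 0 1, m.1 1 0), ?_⟩
      invFun := fun x => ⟨!![x.1, x.2.1.1; x.2.1.2, t - x.1], ?_⟩
      left_inv := ?_
      right_inv := ?_ }
  · obtain ⟨m, ht, hd, -⟩ := m
    rw [trace_fin_two] at ht
    rw [det_fin_two] at hd
    linear_combination m 0 0 * ht - hd
  · obtain ⟨⟨a, ha⟩, ⟨b, c⟩, hbc⟩ := x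
    simp only [trace_fin_two_of, det_fin_two_of] at hbc ⊢
    exact ⟨by ring, by linear_combination -hbc, by simpa using ha⟩
  · rintro ⟨m, ht, -⟩
    rw [trace_fin_two] at ht
    have h₁₁ : m 1 1 = t - m 0 0 := by linear_combination ht
    ext i j
    fin_cases i <;> fin_cases j <;> simp [h₁₁]
  · rintro ⟨⟨a, ha⟩, ⟨b, c⟩, hbc⟩
    rfl

variable [DecidableEq K] {ξ η ξ' η' : K}

theorem card_mul_eq_const (k : K) :
    Nat.card {p : K × K // p.1 * p.2 = k} =
      Fintype.card K - 1 + if k = 0 then Fintype.card K else 0 := by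
  rw [Nat.card_eq_fintype_card, Fintype.card_subtype, card_filter, Fintype.sum_prod_type]
  have hfiber (b : K) : ∑ c : K, (if b * c = k then 1 else 0) =
      if b = 0 then (if k = 0 then Fintype.card K else 0) else 1 := by
    split_ifs with hb hk
    · simp [hb, hk]
    · simp [hb, Ne.symm hk]
    · rw [sum_boole, Nat.cast_id, ← Finset.card_singleton (b⁻¹ * k)]
      congr 1
      ext c
      simp [eq_inv_mul_iff_mul_eq₀ hb]
  simp_rw [hfiber]
  rw [sum_ite, sum_const, sum_const, filter_eq', filter_ne', if_pos (mem_univ _),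
    card_singleton, card_erase_of_mem (mem_univ _), card_univ]
  simp [add_comm]

theorem card_reflection_pairs_eq_sum (hξ : ξ ≠ 0) (hξ'0 : ξ' ≠ 0) (hξ'1 : ξ' ≠ 1)
    (hη'0 : η' ≠ 0) (hη'1 : η' ≠ 1) :
    Nat.card {gh : GL (Fin 2) K × GL (Fin 2) K |
      (∃ z : GL (Fin 2) K,
        ((z * gh.1 * z⁻¹ : GL (Fin 2) K) : Matrix (Fin 2) (Fin 2) K) = refl2 ξ) ∧
      (∃ z : GL (Fin 2) K,
        ((z * gh.2 * z⁻¹ : GL (Fin 2) K) : Matrix (Fin 2) (Fin 2) K) = refl2 η) ∧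
      ((gh.1 * gh.2 : GL (Fin 2) K) : Matrix (Fin 2) (Fin 2) K) = !![ξ', 0; 0, η']} =
      ∑ a ∈ univ.filter (fun a => ξ' * η' = ξ * η ∧ (a - 1) * (η' - ξ') = (ξ' - 1) * (η' - ξ)),
        Nat.card {p : K × K // p.1 * p.2 = a * (ξ + 1 - a) - ξ} := by
  obtain ⟨D, hD⟩ : IsUnit !![ξ', 0; 0, η'] := by
    simp [isUnit_iff_isUnit_det, det_fin_two_of, hξ'0, hη'0]
  simp_rw [Units.exists_conj_eq_iff_isConj, ← hD, Units.val_inj]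
  rw [Nat.card_setOf_mul_eq (fun g : GL (Fin 2) K => IsConj (g : Matrix _ _ K) (refl2 ξ))
    (fun h : GL (Fin 2) K => IsConj (h : Matrix _ _ K) (refl2 η)) D]
  simp_rw [Units.val_mul, coe_units_inv, hD, Set.coe_ofPred]
  rw [Units.card_subtype_val_eq
      (fun m => IsConj m (refl2 ξ) ∧ IsConj (m⁻¹ * !![ξ', 0; 0, η']) (refl2 η))
      fun m hm => (isUnit_iff_isUnit_det m).2 (hm.1.det_eq.trans (det_refl2 ξ) ▸ hξ.isUnit),
    ← card_trace_det_fiber]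
  simp_rw [isConj_refl2_and_inv_mul_diag_iff hξ hξ'1 hη'1, mem_filter_univ]

theorem sum_card_mul_eq_of_ne_one (hξ : ξ ≠ 1) :
    ∑ a : K, Nat.card {p : K × K // p.1 * p.2 = a * (ξ + 1 - a) - ξ} =
      Fintype.card K ^ 2 + Fintype.card K := by
  have hroots : univ.filter (fun a : K => a * (ξ + 1 - a) - ξ = 0) = {1, ξ} := by
    ext a
    have : a * (ξ + 1 - a) - ξ = -((a - 1) * (a - ξ)) := by ring
    rw [mem_filter_univ, this, neg_eq_zero, mul_eq_zero, sub_eq_zero, sub_eq_zero]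
    simp
  simp_rw [card_mul_eq_const]
  rw [sum_add_distrib, sum_ite, hroots, sum_const, sum_const, sum_const_zero, card_univ,
    card_pair (Ne.symm hξ), smul_eq_mul, smul_eq_mul, add_zero]
  obtain ⟨n, hn⟩ := Nat.exists_eq_add_one.2 (Fintype.card_pos (α := K))
  rw [hn, Nat.add_sub_cancel]
  ring

theorem sum_card_mul_eq_of_ne (hξ : ξ ≠ 0) (hξ' : ξ' ≠ 1) (hη' : η' ≠ 1) (hne : ξ' ≠ η')
    (hprod : ξ' * η' = ξ * η) :
    ∑ a ∈ univ.filter (fun a => ξ' * η' = ξ * η ∧ (a - 1) * (η' - ξ') = (ξ' - 1) * (η' - ξ)),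
        Nat.card {p : K × K // p.1 * p.2 = a * (ξ + 1 - a) - ξ} =
      if ({ξ', η'} : Finset K) = {ξ, η} then 2 * Fintype.card K - 1 else Fintype.card K - 1 := by
  have hsub : η' - ξ' ≠ 0 := sub_ne_zero.2 (Ne.symm hne)
  set a₀ := 1 + (ξ' - 1) * (η' - ξ) / (η' - ξ') with ha₀
  have hfilter : univ.filter (fun a => ξ' * η' = ξ * η ∧
      (a - 1) * (η' - ξ') = (ξ' - 1) * (η' - ξ)) = {a₀} := by
    ext a
    simp only [mem_filter_univ, hprod, true_and, mem_singleton, ha₀]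
    rw [← sub_eq_iff_eq_add', eq_div_iff hsub]
  rw [hfilter, sum_singleton, card_mul_eq_const]
  have hk : a₀ * (ξ + 1 - a₀) - ξ = 0 ↔ ({ξ', η'} : Finset K) = {ξ, η} := by
    -- `a₀ - 1 = (ξ' - 1)(η' - ξ) / (η' - ξ')` and `a₀ - ξ = (η' - 1)(ξ' - ξ) / (η' - ξ')`
    have : (a₀ * (ξ + 1 - a₀) - ξ) * (η' - ξ') ^ 2 =
        -((ξ' - 1) * (η' - ξ) * ((η' - 1) * (ξ' - ξ))) := by
      rw [ha₀]; field_simp; ring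
    rw [← mul_left_inj' (pow_ne_zero 2 hsub), this, zero_mul, neg_eq_zero]
    simp only [mul_eq_zero, sub_eq_zero, hξ', hη', false_or, Finset.pair_eq_pair_iff]
    constructor
    · rintro (h | h)
      · exact Or.inr ⟨mul_right_cancel₀ hξ (by linear_combination hprod - ξ' * h), h⟩
      · exact Or.inl ⟨h, mul_left_cancel₀ hξ (by linear_combination hprod - η' * h)⟩
    · rintro (⟨h, -⟩ | ⟨-, h⟩)
      exacts [Or.inr h, Or.inl h]
  have hq := Fintype.card_pos (α := K)
  simp only [hk]
  split_ifs <;> omega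

end Counting

open Finset in
theorem structure_constant_two_reflections_diag_general (q : ℕ) (hq : Fintype.card F = q)
    (ξ η ξ' η' : F) (hξ : ξ ≠ 0)
    (hξ'0 : ξ' ≠ 0) (hξ'1 : ξ' ≠ 1) (hη'0 : η' ≠ 0) (hη'1 : η' ≠ 1) :
    Nat.card {gh : GL (Fin 2) F × GL (Fin 2) F |
      (∃ z : GL (Fin 2) F,
        ((z * gh.1 * z⁻¹ : GL (Fin 2) F) : Matrix (Fin 2) (Fin 2) F) = refl2 ξ) ∧
      (∃ z : GL (Fin 2) F,
        ((z * gh.2 * z⁻¹ : GL (Fin 2) F) : Matrix (Fin 2) (Fin 2) F) = refl2 η) ∧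
      ((gh.1 * gh.2 : GL (Fin 2) F) : Matrix (Fin 2) (Fin 2) F) = !![ξ', 0; 0, η']} =
    if ξ = η ∧ ξ' = ξ ∧ η' = ξ then q ^ 2 + q
    else if ξ' ≠ η' ∧ ({ξ', η'} : Finset F) = {ξ, η} then 2 * q - 1
    else if ξ' * η' = ξ * η ∧ ξ' ≠ η' then q - 1
    else 0 := by
  subst hq
  rw [card_reflection_pairs_eq_sum hξ hξ'0 hξ'1 hη'0 hη'1]
  by_cases hprod : ξ' * η' = ξ * η
  swap
  · rw [filter_false_of_mem fun a _ h => hprod h.1, sum_empty]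
    have hpair : ({ξ', η'} : Finset F) ≠ {ξ, η} := by
      rw [Ne, pair_eq_pair_iff]
      rintro (⟨rfl, rfl⟩ | ⟨rfl, rfl⟩)
      exacts [hprod rfl, hprod (mul_comm _ _)]
    rw [if_neg (by rintro ⟨rfl, rfl, rfl⟩; exact hprod rfl), if_neg fun h => hpair h.2,
      if_neg fun h => hprod h.1]
  rcases eq_or_ne ξ' η' with rfl | hne
  · by_cases hξ' : ξ' = ξ
    · subst hξ'
      obtain rfl : ξ' = η := mul_left_cancel₀ hξ'0 hprod
      rw [filter_true_of_mem fun a _ => ⟨rfl, by ring⟩, sum_card_mul_eq_of_ne_one hξ'1,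
        if_pos ⟨rfl, rfl, rfl⟩]
    · rw [filter_false_of_mem fun a _ h => ?_, sum_empty]
      · simp [hξ']
      · simp only [sub_self, mul_zero, zero_eq_mul, sub_eq_zero] at h
        exact h.2.elim hξ'1 hξ'
  · rw [sum_card_mul_eq_of_ne hξ hξ'1 hη'1 hne hprod]
    have hall : ¬(ξ = η ∧ ξ' = ξ ∧ η' = ξ) := fun h => hne (h.2.1.trans h.2.2.symm)
    rw [if_neg hall]
    simp [hne, hprod]

/-- The number of pairs `(g, h)` in `GL_2(𝔽_q)` with `g ∼ r(ξ)`, `h ∼ r(η)` and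
`g·h = diag(ξ′, η′)` (where `ξ′, η′ ∉ {0, 1}`): it is `q² + q` if
`ξ = η = ξ′ = η′`; `2q - 1` if `ξ′ ≠ η′` and `{ξ′, η′} = {ξ, η}`; `q - 1` if
`ξ′η′ = ξη`, `ξ′ ≠ η′` and `{ξ′, η′} ≠ {ξ, η}`; and `0` otherwise. -/
theorem structure_constant_two_reflections_diag (q : ℕ) (hq : Fintype.card F = q)
    (ξ η ξ' η' : F) (hξ : ξ ≠ 0) (hη : η ≠ 0)
    (hξ'0 : ξ' ≠ 0) (hξ'1 : ξ' ≠ 1) (hη'0 : η' ≠ 0) (hη'1 : η' ≠ 1) :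
    Nat.card {gh : GL (Fin 2) F × GL (Fin 2) F |
      (∃ z : GL (Fin 2) F,
        ((z * gh.1 * z⁻¹ : GL (Fin 2) F) : Matrix (Fin 2) (Fin 2) F) = refl2 ξ) ∧
      (∃ z : GL (Fin 2) F,
        ((z * gh.2 * z⁻¹ : GL (Fin 2) F) : Matrix (Fin 2) (Fin 2) F) = refl2 η) ∧
      ((gh.1 * gh.2 : GL (Fin 2) F) : Matrix (Fin 2) (Fin 2) F) = !![ξ', 0; 0, η']} =
    if ξ = η ∧ ξ' = ξ ∧ η' = ξ then q ^ 2 + q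
    else if ξ' ≠ η' ∧ ({ξ', η'} : Finset F) = {ξ, η} then 2 * q - 1
    else if ξ' * η' = ξ * η ∧ ξ' ≠ η' then q - 1
    else 0 :=
  structure_constant_two_reflections_diag_general q hq ξ η ξ' η' hξ hξ'0 hξ'1 hη'0 hη'1
end

section
/- The number of ordered pairs (g, h) ∈ GL_4(𝔽_q) × GL_4(𝔽_q) such that g is conjugate to J_2(1) ⊕ I_2, h is conjugate to J_2(1) ⊕ I_2, and g·h = J_2(1) ⊕ J_2(1), equals q² + q. (This is the structure constant a^{(1²)_{t−1}}_{(1)_{t−1}, (1)_{t−1}} of the stable center.) -/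
/-!
Write `g = 1 + N` and `h = 1 + M`. Being conjugate to `J₂(1) ⊕ I₂`, both are transvections:
`N = v wᵀ` with `w ⬝ v = 0`, and likewise `M = v' w'ᵀ`. With `A := J₂(1) ⊕ J₂(1) - 1` we have
`N + M + NM = A` and `A² = 0`, hence `NA = NM = AM` and `(NM)² = N A² M = 0`. As
`NM = (w ⬝ v') v w'ᵀ`, this leaves `NM = 0` or `w' ⬝ v = 0`; in the latter case `MN = 0` and
`NM = A² = 0` anyway. So `N + M = A` with `NA = AM = 0`: `N` maps `span {e₁, e₃}` to
`span {e₀, e₂}` through a `2 × 2` block `π`, and `M` through `1 - π`. Both have rank one, so `π`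
is a rank-one idempotent `[[a, b], [c, 1 - a]]`, i.e. `bc = a(1 - a)`, and conversely every such
`π` gives a pair, by exhibiting a Jordan basis. For `b ≠ 0` the entry `c` is determined, for
`b = 0` we need `a ∈ {0, 1}`: there are `q (q - 1) + 2 q = q² + q` triples.
-/

open Matrix

theorem exists_units_conj_eq_of_mul_eq {M : Type*} [Monoid M] {g p : Mˣ} {u : M}
    (h : (g * p : M) = p * u) : ∃ z : Mˣ, ((z * g * z⁻¹ : Mˣ) : M) = u :=
  ⟨p⁻¹, by simp [mul_assoc, h]⟩

theorem vecMulVec_mul_vecMulVec_eq_smul {n R : Type*} [Fintype n] [CommRing R]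
    (v w v' w' : n → R) : vecMulVec v w * vecMulVec v' w' = (w ⬝ᵥ v') • vecMulVec v w' := by
  rw [vecMulVec_mul_vecMulVec, vecMulVec_smul]

theorem sub_one_eq_vecMulVec_of_conj_eq {n R : Type*} [Fintype n] [DecidableEq n] [CommRing R]
    {i j : n} (hij : i ≠ j) {g z : GL n R}
    (hz : ((z * g * z⁻¹ : GL n R) : Matrix n n R) = 1 + single i j 1) :
    ∃ v w : n → R, w ⬝ᵥ v = 0 ∧ (g : Matrix n n R) - 1 = vecMulVec v w := by
  refine ⟨(z⁻¹ : GL n R).val.col i, (z : Matrix n n R).row j, ?_, ?_⟩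
  · simpa [mul_apply, dotProduct, hij.symm, one_apply] using congr_fun₂ z.mul_inv j i
  · have hg : (g : Matrix n n R) =
        ((z⁻¹ : GL n R) : Matrix n n R) * (1 + single i j 1) * (z : Matrix n n R) := by
      rw [← hz]
      simp [mul_assoc]
    rw [hg, mul_add, add_mul, mul_one, ← Units.val_mul, inv_mul_cancel, Units.val_one,
      add_sub_cancel_left, single_eq_single_vecMulVec_single, mul_vecMulVec, vecMulVec_mul,
      mulVec_single_one, single_one_vecMul]

theorem sub_one_mul_sub_one_eq_zero {n K : Type*} [Fintype n] [DecidableEq n] [Field K]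
    {g h : Matrix n n K} {v w v' w' : n → K}
    (hg : g - 1 = vecMulVec v w) (hvw : w ⬝ᵥ v = 0)
    (hh : h - 1 = vecMulVec v' w') (hvw' : w' ⬝ᵥ v' = 0)
    (hgh : (g * h - 1) * (g * h - 1) = 0) :
    (g - 1) * (h - 1) = 0 := by
  set N := g - 1
  set M := h - 1
  set A := g * h - 1
  have hA : A = N + M + N * M := by
    simp only [A, N, M]
    noncomm_ring
  have hNN : N * N = 0 := by rw [hg, vecMulVec_mul_vecMulVec_eq_smul, hvw, zero_smul]
  have hMM : M * M = 0 := by rw [hh, vecMulVec_mul_vecMulVec_eq_smul, hvw', zero_smul]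
  have hNA : N * A = N * M := by
    rw [hA, mul_add, mul_add, ← mul_assoc, hNN, zero_mul, zero_add, add_zero]
  have hAM : A * M = N * M := by
    rw [hA, add_mul, add_mul, mul_assoc, hMM, mul_zero, add_zero, add_zero]
  have hsq : (N * M) * (N * M) = 0 :=
    calc (N * M) * (N * M) = (N * A) * (A * M) := by rw [hNA, hAM]
      _ = N * (A * A) * M := by simp only [mul_assoc]
      _ = 0 := by rw [hgh, mul_zero, zero_mul]
  have hNM : N * M = (w ⬝ᵥ v') • vecMulVec v w' := by
    rw [hg, hh, vecMulVec_mul_vecMulVec_eq_smul]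
  rw [hNM, smul_mul_smul_comm, vecMulVec_mul_vecMulVec_eq_smul, smul_smul, smul_eq_zero,
    mul_eq_zero, mul_self_eq_zero] at hsq
  rcases hsq with (hwv' | hw'v) | hvw'
  · rw [hNM, hwv', zero_smul]
  · have hMN : M * N = 0 := by rw [hg, hh, vecMulVec_mul_vecMulVec_eq_smul, hw'v, zero_smul]
    have hMA : M * A = 0 := by
      rw [hA, mul_add, mul_add, hMN, hMM, ← mul_assoc, hMN, zero_mul, add_zero, add_zero]
    calc N * M = N * A := hNA.symm
      _ = (N + M + N * M) * A := by
        rw [add_mul, add_mul, hMA, mul_assoc, hMA, mul_zero, add_zero, add_zero]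
      _ = 0 := by rw [← hA, hgh]
  · rw [hNM, hvw', smul_zero]

section FourByFour

variable {K : Type*} [Field K]

/-- The block `[[a, b], [c, d]]`, as a map from `span {e₁, e₃}` to `span {e₀, e₂}`. -/
def oddToEven (a b c d : K) : Matrix (Fin 4) (Fin 4) K :=
  !![0, a, 0, b; 0, 0, 0, 0; 0, c, 0, d; 0, 0, 0, 0]

theorem oddToEven_mul_oddToEven (a b c d a' b' c' d' : K) :
    oddToEven a b c d * oddToEven a' b' c' d' = 0 := by
  ext i j
  fin_cases i <;> fin_cases j <;> simp [oddToEven, mul_apply, Fin.sum_univ_four]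

theorem oddToEven_sub_oddToEven (a b c d a' b' c' d' : K) :
    oddToEven a b c d - oddToEven a' b' c' d' =
      oddToEven (a - a') (b - b') (c - c') (d - d') := by
  ext i j
  fin_cases i <;> fin_cases j <;> simp [oddToEven]

theorem J2I2_eq_one_add_single :
    (!![1, 1, 0, 0; 0, 1, 0, 0; 0, 0, 1, 0; 0, 0, 0, 1] : Matrix (Fin 4) (Fin 4) K) =
      1 + single 0 1 1 := by
  ext i j
  fin_cases i <;> fin_cases j <;> simp [one_apply]

theorem J2J2_eq_one_add_oddToEven :
    (!![1, 1, 0, 0; 0, 1, 0, 0; 0, 0, 1, 1; 0, 0, 0, 1] : Matrix (Fin 4) (Fin 4) K) =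
      1 + oddToEven 1 0 0 1 := by
  ext i j
  fin_cases i <;> fin_cases j <;> simp [oddToEven, one_apply]

theorem eq_oddToEven_of_add_eq {N M : Matrix (Fin 4) (Fin 4) K}
    (hNA : N * oddToEven 1 0 0 1 = 0) (hAM : oddToEven 1 0 0 1 * M = 0)
    (hsum : N + M = oddToEven 1 0 0 1) :
    N = oddToEven (N 0 1) (N 0 3) (N 2 1) (N 2 3) := by
  have hcol : ∀ i, N i 0 = 0 ∧ N i 2 = 0 := fun i =>
    ⟨by simpa [oddToEven, mul_apply, Fin.sum_univ_four] using congr_fun₂ hNA i 1,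
      by simpa [oddToEven, mul_apply, Fin.sum_univ_four] using congr_fun₂ hNA i 3⟩
  have hrow : ∀ j, N 1 j = 0 ∧ N 3 j = 0 := fun j => by
    have h1 := congr_fun₂ hAM 0 j
    have h3 := congr_fun₂ hAM 2 j
    have s1 := congr_fun₂ hsum 1 j
    have s3 := congr_fun₂ hsum 3 j
    simp only [oddToEven, mul_apply, Fin.sum_univ_four, Matrix.add_apply] at h1 h3 s1 s3
    fin_cases j <;> simp_all
  ext i j
  fin_cases i <;> fin_cases j <;> simp [oddToEven, hcol, hrow]

theorem mul_eq_mul_of_oddToEven_eq_vecMulVec {a b c d : K} {v w : Fin 4 → K}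
    (h : oddToEven a b c d = vecMulVec v w) : a * d = b * c := by
  have ha : a = v 0 * w 1 := by simpa [oddToEven, vecMulVec_apply] using congr_fun₂ h 0 1
  have hb : b = v 0 * w 3 := by simpa [oddToEven, vecMulVec_apply] using congr_fun₂ h 0 3
  have hc : c = v 2 * w 1 := by simpa [oddToEven, vecMulVec_apply] using congr_fun₂ h 2 1
  have hd : d = v 2 * w 3 := by simpa [oddToEven, vecMulVec_apply] using congr_fun₂ h 2 3
  rw [ha, hb, hc, hd]
  ring

theorem exists_params_of_mul_eq {g h : Matrix (Fin 4) (Fin 4) K} {v w v' w' : Fin 4 → K}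
    (hg : g - 1 = vecMulVec v w) (hvw : w ⬝ᵥ v = 0)
    (hh : h - 1 = vecMulVec v' w') (hvw' : w' ⬝ᵥ v' = 0)
    (hgh : g * h = 1 + oddToEven 1 0 0 1) :
    ∃ a b c : K, b * c = a * (1 - a) ∧
      g = 1 + oddToEven a b c (1 - a) ∧ h = 1 + oddToEven (1 - a) (-b) (-c) a := by
  set N := g - 1
  set M := h - 1
  have hA : g * h - 1 = oddToEven 1 0 0 1 := by rw [hgh, add_sub_cancel_left]
  have hNM : N * M = 0 :=
    sub_one_mul_sub_one_eq_zero hg hvw hh hvw' (by rw [hA, oddToEven_mul_oddToEven])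
  have hsum : N + M = oddToEven 1 0 0 1 := by
    rw [← hA, ← add_zero (N + M), ← hNM]
    simp only [N, M]
    noncomm_ring
  have hNN : N * N = 0 := by rw [hg, vecMulVec_mul_vecMulVec_eq_smul, hvw, zero_smul]
  have hMM : M * M = 0 := by rw [hh, vecMulVec_mul_vecMulVec_eq_smul, hvw', zero_smul]
  have hN := eq_oddToEven_of_add_eq (by rw [← hsum, mul_add, hNN, hNM, add_zero])
    (by rw [← hsum, add_mul, hNM, hMM, add_zero]) hsum
  set a := N 0 1
  set b := N 0 3
  set c := N 2 1
  set d := N 2 3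
  have hM : M = oddToEven (1 - a) (0 - b) (0 - c) (1 - d) := by
    rw [← oddToEven_sub_oddToEven, ← hN, ← hsum, add_sub_cancel_left]
  have hdetN := mul_eq_mul_of_oddToEven_eq_vecMulVec (hN.symm.trans hg)
  have hdetM := mul_eq_mul_of_oddToEven_eq_vecMulVec (hM.symm.trans hh)
  have hd : d = 1 - a := by linear_combination hdetN - hdetM
  rw [hd, sub_sub_cancel, zero_sub, zero_sub] at hM
  refine ⟨a, b, c, by linear_combination -hdetN + a * hd, ?_, ?_⟩
  · rw [← hd, ← hN, add_sub_cancel]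
  · rw [← hM, add_sub_cancel]

theorem exists_conj_eq_J2I2 {a b c : K} (hbc : b * c = a * (1 - a)) {g : GL (Fin 4) K}
    (hg : (g : Matrix (Fin 4) (Fin 4) K) = 1 + oddToEven a b c (1 - a)) :
    ∃ z : GL (Fin 4) K, ((z * g * z⁻¹ : GL (Fin 4) K) : Matrix (Fin 4) (Fin 4) K) =
      !![1, 1, 0, 0; 0, 1, 0, 0; 0, 0, 1, 0; 0, 0, 0, 1] := by
  -- the columns of `P` are a Jordan basis of `g`
  suffices ∃ P : Matrix (Fin 4) (Fin 4) K, P.det ≠ 0 ∧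
      (1 + oddToEven a b c (1 - a)) * P = P * !![1, 1, 0, 0; 0, 1, 0, 0; 0, 0, 1, 0; 0, 0, 0, 1] by
    obtain ⟨P, hP, hgP⟩ := this
    exact exists_units_conj_eq_of_mul_eq (p := (P.isUnit_iff_isUnit_det.mpr hP.isUnit).unit)
      (by rw [hg]; exact hgP)
  rcases eq_or_ne c 0 with rfl | hc
  · obtain rfl | rfl : a = 0 ∨ a = 1 := by
      rcases mul_eq_zero.mp (hbc.symm.trans (mul_zero b)) with h | h
      · exact .inl h
      · exact .inr (sub_eq_zero.mp h).symm
    · refine ⟨!![b, 0, 1, 0; 0, 0, 0, 1; 1, 0, 0, 0; 0, 1, 0, 0], ?_, ?_⟩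
      · simp [det_succ_row_zero, Fin.sum_univ_succ, Fin.succAbove_of_le_castSucc,
          Fin.succAbove_of_castSucc_lt]
      · ext i j
        fin_cases i <;> fin_cases j <;> simp [oddToEven, mul_apply, Fin.sum_univ_four, one_apply]
    · refine ⟨!![1, 0, 0, 0; 0, 1, 0, b; 0, 0, 1, 0; 0, 0, 0, -1], ?_, ?_⟩
      · simp [det_succ_row_zero, Fin.sum_univ_succ, Fin.succAbove_of_le_castSucc,
          Fin.succAbove_of_castSucc_lt]
      · ext i j
        fin_cases i <;> fin_cases j <;> simp [oddToEven, mul_apply, Fin.sum_univ_four, one_apply]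
  · refine ⟨!![a, 0, 1, 0; 0, 1, 0, 1 - a; c, 0, 0, 0; 0, 0, 0, -c], ?_, ?_⟩
    · simp [det_succ_row_zero, Fin.sum_univ_succ, Fin.succAbove_of_le_castSucc,
        Fin.succAbove_of_castSucc_lt, hc]
    · ext i j
      fin_cases i <;> fin_cases j <;>
        simp [oddToEven, mul_apply, Fin.sum_univ_four, one_apply, hbc]
      ring

def IsJ2J2Factorization (gh : GL (Fin 4) K × GL (Fin 4) K) : Prop :=
  (∃ z : GL (Fin 4) K,
    ((z * gh.1 * z⁻¹ : GL (Fin 4) K) : Matrix (Fin 4) (Fin 4) K) =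
      !![1, 1, 0, 0; 0, 1, 0, 0; 0, 0, 1, 0; 0, 0, 0, 1]) ∧
  (∃ z : GL (Fin 4) K,
    ((z * gh.2 * z⁻¹ : GL (Fin 4) K) : Matrix (Fin 4) (Fin 4) K) =
      !![1, 1, 0, 0; 0, 1, 0, 0; 0, 0, 1, 0; 0, 0, 0, 1]) ∧
  ((gh.1 * gh.2 : GL (Fin 4) K) : Matrix (Fin 4) (Fin 4) K) =
    !![1, 1, 0, 0; 0, 1, 0, 0; 0, 0, 1, 1; 0, 0, 0, 1]

theorem exists_params_of_isJ2J2Factorization {gh : GL (Fin 4) K × GL (Fin 4) K}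
    (h : IsJ2J2Factorization gh) :
    ∃ a b c : K, b * c = a * (1 - a) ∧
      (gh.1 : Matrix (Fin 4) (Fin 4) K) = 1 + oddToEven a b c (1 - a) ∧
      (gh.2 : Matrix (Fin 4) (Fin 4) K) = 1 + oddToEven (1 - a) (-b) (-c) a := by
  obtain ⟨⟨z, hz⟩, ⟨z', hz'⟩, hgh⟩ := h
  obtain ⟨v, w, hvw, hg⟩ :=
    sub_one_eq_vecMulVec_of_conj_eq (by decide) (hz.trans J2I2_eq_one_add_single)
  obtain ⟨v', w', hvw', hh⟩ :=
    sub_one_eq_vecMulVec_of_conj_eq (by decide) (hz'.trans J2I2_eq_one_add_single)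
  rw [Units.val_mul, J2J2_eq_one_add_oddToEven] at hgh
  exact exists_params_of_mul_eq hg hvw hh hvw' hgh

def oneAddOddToEven (a b c d : K) : GL (Fin 4) K where
  val := 1 + oddToEven a b c d
  inv := 1 - oddToEven a b c d
  val_inv := by
    rw [add_mul, one_mul, mul_sub, mul_one, oddToEven_mul_oddToEven, sub_zero, sub_add_cancel]
  inv_val := by
    rw [sub_mul, one_mul, mul_add, mul_one, oddToEven_mul_oddToEven, add_zero,
      add_sub_cancel_right]

/-- `(a, b, c)` stands for the rank-one idempotent `[[a, b], [c, 1 - a]]`. -/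
def idempotentParams (K : Type*) [Field K] : Set (K × K × K) :=
  {p | p.2.1 * p.2.2 = p.1 * (1 - p.1)}

def pairOfParams (p : K × K × K) : GL (Fin 4) K × GL (Fin 4) K :=
  (oneAddOddToEven p.1 p.2.1 p.2.2 (1 - p.1), oneAddOddToEven (1 - p.1) (-p.2.1) (-p.2.2) p.1)

theorem isJ2J2Factorization_pairOfParams {p : K × K × K} (hp : p ∈ idempotentParams K) :
    IsJ2J2Factorization (pairOfParams p) := by
  obtain ⟨a, b, c⟩ := p
  have hbc : b * c = a * (1 - a) := hp
  refine ⟨exists_conj_eq_J2I2 hbc rfl,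
    exists_conj_eq_J2I2 (a := 1 - a) (b := -b) (c := -c) (by linear_combination hbc)
      (by rw [sub_sub_cancel]; rfl), ?_⟩
  ext i j
  fin_cases i <;> fin_cases j <;>
    simp [pairOfParams, oneAddOddToEven, oddToEven, mul_apply, Fin.sum_univ_four, one_apply]

theorem pairOfParams_injective : Function.Injective (pairOfParams (K := K)) := by
  rintro ⟨a, b, c⟩ ⟨a', b', c'⟩ h
  have entry (i j : Fin 4) :
      (1 + oddToEven a b c (1 - a)) i j = (1 + oddToEven a' b' c' (1 - a')) i j :=
    congr_arg (fun gh => (gh.1 : Matrix (Fin 4) (Fin 4) K) i j) h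
  have ha := entry 0 1
  have hb := entry 0 3
  have hc := entry 2 1
  simp [oddToEven] at ha hb hc
  rw [ha, hb, hc]

def idempotentParamsEquiv [DecidableEq K] :
    idempotentParams K ≃ (K × Kˣ) ⊕ ({a : K // a * (1 - a) = 0} × K) where
  toFun p :=
    if hb : p.1.2.1 = 0 then .inr (⟨p.1.1, by rw [← p.2, hb, zero_mul]⟩, p.1.2.2)
    else .inl (p.1.1, Units.mk0 _ hb)
  invFun := Sum.elim
    (fun x => ⟨(x.1, x.2, x.2⁻¹ * (x.1 * (1 - x.1))), x.2.mul_inv_cancel_left _⟩)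
    (fun y => ⟨(y.1, 0, y.2), (zero_mul y.2).trans y.1.2.symm⟩)
  left_inv := by
    rintro ⟨⟨a, b, c⟩, hp⟩
    by_cases hb : b = 0
    · simp [hb]
    · simp only [hb, dite_false, Sum.elim_inl]
      ext
      · rfl
      · rfl
      · show b⁻¹ * (a * (1 - a)) = c
        rw [← (hp : b * c = a * (1 - a)), inv_mul_cancel_left₀ hb]
  right_inv := by
    rintro (⟨a, u⟩ | ⟨⟨a, ha⟩, c⟩) <;> simp

theorem card_idempotentParams [Finite K] :
    Nat.card (idempotentParams K) = Nat.card K ^ 2 + Nat.card K := by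
  classical
  have hroots : Nat.card {a : K // a * (1 - a) = 0} = 2 := by
    have : {a : K | a * (1 - a) = 0} = {0, 1} := by
      ext a
      simp [sub_eq_zero, eq_comm (a := (1 : K))]
    rw [← Set.coe_ofPred, this, Nat.card_coe_set_eq, Set.ncard_pair zero_ne_one]
  rw [Nat.card_congr idempotentParamsEquiv, Nat.card_sum, Nat.card_prod, Nat.card_prod, hroots,
    Nat.card_eq_card_units_add_one K]
  ring

end FourByFour

variable {F : Type*} [Field F] [Fintype F] [DecidableEq F]

/-- The number of pairs `(g, h)` in `GL_4(𝔽_q)` with `g ∼ J_2(1) ⊕ I_2`,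
`h ∼ J_2(1) ⊕ I_2` and `g·h = J_2(1) ⊕ J_2(1)` equals `q² + q`. This is the
structure constant `a^{(1²)_{t-1}}_{(1)_{t-1}, (1)_{t-1}}` of the stable
center. -/
theorem structure_constant_J2J2 (q : ℕ) (hq : Fintype.card F = q) :
    Nat.card {gh : GL (Fin 4) F × GL (Fin 4) F |
      (∃ z : GL (Fin 4) F,
        ((z * gh.1 * z⁻¹ : GL (Fin 4) F) : Matrix (Fin 4) (Fin 4) F) =
          !![1, 1, 0, 0; 0, 1, 0, 0; 0, 0, 1, 0; 0, 0, 0, 1]) ∧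
      (∃ z : GL (Fin 4) F,
        ((z * gh.2 * z⁻¹ : GL (Fin 4) F) : Matrix (Fin 4) (Fin 4) F) =
          !![1, 1, 0, 0; 0, 1, 0, 0; 0, 0, 1, 0; 0, 0, 0, 1]) ∧
      ((gh.1 * gh.2 : GL (Fin 4) F) : Matrix (Fin 4) (Fin 4) F) =
        !![1, 1, 0, 0; 0, 1, 0, 0; 0, 0, 1, 1; 0, 0, 0, 1]} = q ^ 2 + q := by
  rw [← hq, ← Nat.card_eq_fintype_card, ← card_idempotentParams]
  refine (Nat.card_eq_of_bijective
    (fun p => ⟨pairOfParams p.1, isJ2J2Factorization_pairOfParams p.2⟩) ⟨?_, ?_⟩).symm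
  · exact fun p p' h => Subtype.ext (pairOfParams_injective (congr_arg Subtype.val h))
  · rintro ⟨gh, hgh⟩
    obtain ⟨a, b, c, hbc, hg, hh⟩ := exists_params_of_isJ2J2Factorization hgh
    exact ⟨⟨(a, b, c), hbc⟩, Subtype.ext (Prod.ext (Units.ext hg.symm) (Units.ext hh.symm))⟩
end

section
/- Let c, d ≥ 1 and ξ ∈ 𝔽_q \ {0, 1}. Let N be the number of ordered pairs (g, h) ∈ GL_{c+d}(𝔽_q) × GL_{c+d}(𝔽_q) such that g is conjugate to (ξ·I_c) ⊕ I_d, h is conjugate to (ξ·I_d) ⊕ I_c, and g·h = ξ·I_{c+d}. Then N = q^{cd} · [c+d choose c]_q, where [c+d choose c]_q is the Gaussian binomial coefficient; equivalently, N · ∏_{i=1}^{c} (q^i − 1) = q^{cd} · ∏_{i=1}^{c} (q^{d+i} − 1). (This is the structure constant a^{(1^{c+d})_{t−ξ}}_{(1^c)_{t−ξ}, (1^d)_{t−ξ}} of the stable center.) -/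
/-!
Since `ξ • 1` is central, `h = g⁻¹ * (ξ • 1)` is determined by `g`, and for `g` conjugate to
`t = (ξ I_c) ⊕ I_d` it is conjugate to `t⁻¹ * (ξ • 1) = I_c ⊕ ξ I_d`, a coordinate permutation of
`(ξ I_d) ⊕ I_c`. So `N` is the size of the conjugacy class of `t`, i.e. `|GL_{c+d}| / |C(t)|`.
As `ξ ≠ 1`, a matrix commuting with `t` is block diagonal, so `C(t) ≅ GL_c × GL_d`, and the
formula follows from `|GL_n(𝔽_q)| = q^(n(n-1)/2) ∏_{i=1}^{n} (q^i - 1)`.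
-/

open Matrix Subgroup

section ConjugacyClasses

variable {G : Type*} [Group G]

theorem nat_card_isConj_mul_nat_card_centralizer (t : G) :
    Nat.card {g : G | IsConj g t} * Nat.card (centralizer {t}) = Nat.card G := by
  have hclass : {g : G | IsConj g t} = MulAction.orbit (ConjAct G) t :=
    Set.ext fun _ ↦ ConjAct.mem_orbit_conjAct.symm
  rw [hclass, nat_card_centralizer_nat_card_stabilizer, ← Nat.card_prod]
  exact Nat.card_congr (MulAction.orbitProdStabilizerEquivGroup (ConjAct G) t)

theorem IsConj.inv_mul_of_mem_center {g t s : G} (hg : IsConj g t) (hs : s ∈ center G) :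
    IsConj (g⁻¹ * s) (t⁻¹ * s) := by
  obtain ⟨c, rfl⟩ := isConj_iff.1 hg
  refine isConj_iff.2 ⟨c, ?_⟩
  rw [mul_assoc c, mul_assoc g⁻¹, ← mem_center_iff.1 hs c⁻¹]
  group

theorem nat_card_isConj_pairs_mul_eq {s t u : G} (hs : s ∈ center G) (hu : IsConj u (t⁻¹ * s)) :
    Nat.card {gh : G × G | IsConj gh.1 t ∧ IsConj gh.2 u ∧ gh.1 * gh.2 = s} =
      Nat.card {g : G | IsConj g t} :=
  Nat.card_congr
    { toFun gh := ⟨gh.1.1, gh.2.1⟩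
      invFun g := ⟨(g, g.1⁻¹ * s),
        g.2, (g.2.inv_mul_of_mem_center hs).trans hu.symm, mul_inv_cancel_left _ _⟩
      left_inv gh := by
        obtain ⟨⟨g, h⟩, -, -, rfl⟩ := gh
        simp
      right_inv _ := rfl }

theorem MulEquiv.nat_card_centralizer_apply {H : Type*} [Group H] (e : G ≃* H) (x : G) :
    Nat.card (centralizer {e x}) = Nat.card (centralizer {x}) :=
  Nat.card_congr (e.toEquiv.subtypeEquiv fun g ↦ by
    simp [mem_centralizer_singleton_iff, ← map_mul, e.injective.eq_iff]).symm

end ConjugacyClasses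

section FinAdd

variable {c d : ℕ}

theorem sumElim_const_comp_finSumFinEquiv_symm {α : Type*} (a b : α) :
    Sum.elim (fun _ : Fin c ↦ a) (fun _ : Fin d ↦ b) ∘ finSumFinEquiv.symm =
      fun i : Fin (c + d) ↦ if (i : ℕ) < c then a else b := by
  funext i
  refine Fin.addCases (fun k ↦ ?_) (fun k ↦ ?_) i <;> simp

theorem ite_comp_finAddFlip {α : Type*} (a b : α) :
    (fun i : Fin (c + d) ↦ if (i : ℕ) < c then b else a) ∘
        ((finCongr (add_comm c d)).trans finAddFlip) =
      fun i : Fin (c + d) ↦ if (i : ℕ) < d then a else b := by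
  funext ⟨i, hi⟩
  rcases lt_or_ge i d with h | h
  · simp [h, finAddFlip_apply_mk_left h]
  · have hsub : i - d < c := by omega
    simp [h.not_gt, hsub, finAddFlip_apply_mk_right h]

end FinAdd

section ProdRange

open Finset

theorem prod_range_pow_sub_pow (q m : ℕ) :
    ∏ i ∈ range m, (q ^ m - q ^ i) =
      q ^ (∑ i ∈ range m, i) * ∏ i ∈ range m, (q ^ (i + 1) - 1) := by
  have hfactor : ∀ i ∈ range m, q ^ m - q ^ i = q ^ i * (q ^ (m - 1 - i + 1) - 1) := by
    intro i hi
    rw [mem_range] at hi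
    rw [Nat.mul_sub, mul_one, ← pow_add]
    congr 2
    omega
  rw [prod_congr rfl hfactor, prod_mul_distrib, prod_pow_eq_pow_sum,
    prod_range_reflect (fun j ↦ q ^ (j + 1) - 1) m]

theorem prod_range_pow_sub_pow_add (q c d : ℕ) :
    (∏ i ∈ range (c + d), (q ^ (c + d) - q ^ i)) * ∏ i ∈ range c, (q ^ (i + 1) - 1) =
      q ^ (c * d) * (∏ i ∈ range c, (q ^ (d + i + 1) - 1)) *
        ((∏ i ∈ range c, (q ^ c - q ^ i)) * ∏ i ∈ range d, (q ^ d - q ^ i)) := by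
  have hsum : ∑ i ∈ range (c + d), i = ∑ i ∈ range c, i + ∑ i ∈ range d, i + c * d := by
    rw [sum_range_add, sum_add_distrib, sum_const, card_range, smul_eq_mul]
    ring
  have hprod : ∏ i ∈ range (c + d), (q ^ (i + 1) - 1) =
      (∏ i ∈ range d, (q ^ (i + 1) - 1)) * ∏ i ∈ range c, (q ^ (d + i + 1) - 1) := by
    rw [add_comm c d, prod_range_add]
  rw [prod_range_pow_sub_pow, prod_range_pow_sub_pow, prod_range_pow_sub_pow, hsum, hprod,
    pow_add, pow_add]
  ring

end ProdRange

namespace Matrix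

section DiagonalGL

variable {n R : Type*} [Fintype n] [DecidableEq n] [CommRing R]

def diagonalGL : (n → Rˣ) →* GL n R :=
  (Units.map (diagonalRingHom n R).toMonoidHom).comp MulEquiv.piUnits.symm.toMonoidHom

@[simp]
theorem coe_diagonalGL (w : n → Rˣ) : (diagonalGL w : Matrix n n R) = diagonal fun i ↦ (w i : R) :=
  rfl

theorem diagonalGL_const_mem_center (a : Rˣ) : diagonalGL (fun _ : n ↦ a) ∈ center (GL n R) :=
  mem_center_iff.2 fun g ↦ Units.ext <| by
    ext i j
    simp [mul_comm]

def permGL : Equiv.Perm n →* GL n R :=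
  (Units.map permMatrixHom).comp toUnits.toMonoidHom

theorem isConj_diagonalGL_comp (w : n → Rˣ) (σ : Equiv.Perm n) :
    IsConj (diagonalGL (w ∘ σ)) (diagonalGL w) :=
  isConj_iff.2 ⟨permGL σ, Units.ext <| by
    simp [permGL, PEquiv.toMatrix_toPEquiv_mul, PEquiv.mul_toMatrix_toPEquiv]⟩

def reindexGL {m : Type*} [Fintype m] [DecidableEq m] (e : m ≃ n) : GL m R ≃* GL n R :=
  Units.mapEquiv (reindexAlgEquiv R R e).toMulEquiv

theorem reindexGL_diagonalGL {m : Type*} [Fintype m] [DecidableEq m] (e : m ≃ n) (w : m → Rˣ) :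
    reindexGL e (diagonalGL w) = diagonalGL (w ∘ e.symm) :=
  Units.ext <| by simp [reindexGL, submatrix_diagonal_equiv]

theorem apply_eq_zero_of_commute_diagonal [NoZeroDivisors R] {M : Matrix n n R}
    {w : n → R} (hM : Commute M (diagonal w)) {i j : n} (hij : w i ≠ w j) : M i j = 0 := by
  have hentry := congrFun (congrFun hM.eq i) j
  rw [mul_diagonal, diagonal_mul, mul_comm] at hentry
  have hprod : (w i - w j) * M i j = 0 := by rw [sub_mul, ← hentry, sub_self]
  exact (mul_eq_zero.1 hprod).resolve_left (sub_ne_zero.2 hij)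

end DiagonalGL

section BlockDiagonal

variable {m n R : Type*} [Fintype m] [Fintype n] [DecidableEq m] [DecidableEq n] [CommRing R]

theorem fromBlocks_toBlocks_of_commute_diagonal [NoZeroDivisors R] {a b : R} (hab : a ≠ b)
    {M : Matrix (m ⊕ n) (m ⊕ n) R}
    (hM : Commute M (diagonal (Sum.elim (fun _ ↦ a) fun _ ↦ b))) :
    fromBlocks M.toBlocks₁₁ 0 0 M.toBlocks₂₂ = M := by
  have h₁₂ : M.toBlocks₁₂ = 0 := by
    ext i j
    exact M.apply_eq_zero_of_commute_diagonal hM hab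
  have h₂₁ : M.toBlocks₂₁ = 0 := by
    ext i j
    exact M.apply_eq_zero_of_commute_diagonal hM hab.symm
  rw [← h₁₂, ← h₂₁, fromBlocks_toBlocks]

def fromBlocksDiagonalHom : Matrix m m R × Matrix n n R →* Matrix (m ⊕ n) (m ⊕ n) R where
  toFun AB := fromBlocks AB.1 0 0 AB.2
  map_one' := fromBlocks_one
  map_mul' _ _ := by simp [fromBlocks_multiply]

def blockDiagonalGL : GL m R × GL n R →* GL (m ⊕ n) R :=
  (Units.map fromBlocksDiagonalHom).comp MulEquiv.prodUnits.symm.toMonoidHom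

@[simp]
theorem coe_blockDiagonalGL (A : GL m R) (B : GL n R) :
    (blockDiagonalGL (A, B) : Matrix (m ⊕ n) (m ⊕ n) R) = fromBlocks A 0 0 B :=
  rfl

theorem blockDiagonalGL_injective :
    Function.Injective (blockDiagonalGL : GL m R × GL n R → GL (m ⊕ n) R) := by
  rintro ⟨A, B⟩ ⟨A', B'⟩ h
  have hval := congrArg Units.val h
  rw [coe_blockDiagonalGL, coe_blockDiagonalGL] at hval
  obtain ⟨hA, -, -, hB⟩ := fromBlocks_inj.1 hval
  rw [Units.ext hA, Units.ext hB]

theorem centralizer_diagonalGL_sumElim [NoZeroDivisors R] {a b : Rˣ} (hab : a ≠ b) :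
    centralizer {diagonalGL (Sum.elim (fun _ : m ↦ a) fun _ : n ↦ b)} =
      (blockDiagonalGL : GL m R × GL n R →* GL (m ⊕ n) R).range := by
  have hw : (fun i ↦ ((Sum.elim (fun _ : m ↦ a) (fun _ : n ↦ b) i : Rˣ) : R)) =
      Sum.elim (fun _ ↦ (a : R)) fun _ ↦ (b : R) := by
    ext (_ | _) <;> rfl
  ext U
  rw [mem_centralizer_singleton_iff, MonoidHom.mem_range]
  constructor
  · intro hU
    have hcomm : Commute (U : Matrix (m ⊕ n) (m ⊕ n) R)
        (diagonal (Sum.elim (fun _ ↦ (a : R)) fun _ ↦ (b : R))) := by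
      simpa [hw, Commute, SemiconjBy] using congrArg Units.val hU
    have hblocks := fromBlocks_toBlocks_of_commute_diagonal (Units.val_injective.ne hab) hcomm
    have hdet : IsUnit ((U : Matrix (m ⊕ n) (m ⊕ n) R).toBlocks₁₁.det *
        (U : Matrix (m ⊕ n) (m ⊕ n) R).toBlocks₂₂.det) := by
      rw [← det_fromBlocks_zero₂₁ _ 0, hblocks]
      exact U.isUnit.map detMonoidHom
    obtain ⟨hA, hB⟩ := IsUnit.mul_iff.1 hdet
    exact ⟨(((isUnit_iff_isUnit_det _).2 hA).unit, ((isUnit_iff_isUnit_det _).2 hB).unit),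
      Units.ext hblocks⟩
  · rintro ⟨⟨A, B⟩, rfl⟩
    ext : 1
    simp only [Units.val_mul, coe_blockDiagonalGL, coe_diagonalGL, hw, ← fromBlocks_diagonal,
      fromBlocks_multiply]
    simp only [fromBlocks_inj, ← scalar_apply, Matrix.mul_zero, Matrix.zero_mul, add_zero,
      zero_add, true_and]
    exact ⟨(scalar_commute _ (fun _ ↦ Commute.all _ _) _).symm.eq,
      (scalar_commute _ (fun _ ↦ Commute.all _ _) _).symm.eq⟩

theorem nat_card_centralizer_diagonalGL_sumElim [NoZeroDivisors R] {a b : Rˣ} (hab : a ≠ b) :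
    Nat.card (centralizer {diagonalGL (Sum.elim (fun _ : m ↦ a) fun _ : n ↦ b)}) =
      Nat.card (GL m R) * Nat.card (GL n R) := by
  rw [centralizer_diagonalGL_sumElim hab, ← Nat.card_prod]
  exact (Nat.card_congr (MonoidHom.ofInjective blockDiagonalGL_injective).toEquiv).symm

end BlockDiagonal

section FinAdd

variable {c d : ℕ} {R : Type*} [CommRing R]

theorem isConj_diagonalGL_ite_swap (a b : Rˣ) :
    IsConj (diagonalGL fun i : Fin (c + d) ↦ if (i : ℕ) < d then a else b)
      (diagonalGL fun i ↦ if (i : ℕ) < c then b else a) := by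
  rw [← ite_comp_finAddFlip]
  exact isConj_diagonalGL_comp _ _

theorem nat_card_centralizer_diagonalGL_ite [NoZeroDivisors R] {a b : Rˣ} (hab : a ≠ b) :
    Nat.card (centralizer {diagonalGL fun i : Fin (c + d) ↦ if (i : ℕ) < c then a else b}) =
      Nat.card (GL (Fin c) R) * Nat.card (GL (Fin d) R) := by
  rw [← sumElim_const_comp_finSumFinEquiv_symm, ← reindexGL_diagonalGL,
    MulEquiv.nat_card_centralizer_apply, nat_card_centralizer_diagonalGL_sumElim hab]

end FinAdd

theorem nat_card_GL_fin {K : Type*} [Field K] [Fintype K] (n : ℕ) :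
    Nat.card (GL (Fin n) K) = ∏ i ∈ Finset.range n, (Fintype.card K ^ n - Fintype.card K ^ i) := by
  rw [card_GL_field, Fin.prod_univ_eq_prod_range (fun i ↦ Fintype.card K ^ n - Fintype.card K ^ i)]

end Matrix

variable {F : Type*} [Field F] [Fintype F] [DecidableEq F]

theorem structure_constant_scalar_blocks_general (q : ℕ) (hq : Fintype.card F = q)
    {c d : ℕ} (ξ : F) (hξ0 : ξ ≠ 0) (hξ1 : ξ ≠ 1) :
    Nat.card {gh : GL (Fin (c + d)) F × GL (Fin (c + d)) F |
      (∃ z : GL (Fin (c + d)) F,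
        ((z * gh.1 * z⁻¹ : GL (Fin (c + d)) F) : Matrix (Fin (c + d)) (Fin (c + d)) F) =
          Matrix.diagonal (fun i : Fin (c + d) => if (i : ℕ) < c then ξ else 1)) ∧
      (∃ z : GL (Fin (c + d)) F,
        ((z * gh.2 * z⁻¹ : GL (Fin (c + d)) F) : Matrix (Fin (c + d)) (Fin (c + d)) F) =
          Matrix.diagonal (fun i : Fin (c + d) => if (i : ℕ) < d then ξ else 1)) ∧
      ((gh.1 * gh.2 : GL (Fin (c + d)) F) : Matrix (Fin (c + d)) (Fin (c + d)) F) =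
        Matrix.diagonal (fun _ : Fin (c + d) => ξ)} *
      ∏ i ∈ Finset.range c, (q ^ (i + 1) - 1) =
    q ^ (c * d) * ∏ i ∈ Finset.range c, (q ^ (d + i + 1) - 1) := by
  set x : Fˣ := Units.mk0 ξ hξ0
  have hx1 : x ≠ 1 := fun h ↦ hξ1 (Units.val_eq_one.2 h)
  set t := diagonalGL fun i : Fin (c + d) ↦ if (i : ℕ) < c then x else 1
  set u := diagonalGL fun i : Fin (c + d) ↦ if (i : ℕ) < d then x else 1
  set s := diagonalGL fun _ : Fin (c + d) ↦ x
  have hu : IsConj u (t⁻¹ * s) := by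
    convert isConj_diagonalGL_ite_swap x 1 using 2
    rw [← map_inv, ← map_mul]
    congr 1
    funext i
    by_cases h : (i : ℕ) < c <;> simp [h]
  have hcard : Nat.card {gh : GL (Fin (c + d)) F × GL (Fin (c + d)) F |
      IsConj gh.1 t ∧ IsConj gh.2 u ∧ gh.1 * gh.2 = s} *
        (Nat.card (GL (Fin c) F) * Nat.card (GL (Fin d) F)) = Nat.card (GL (Fin (c + d)) F) := by
    rw [nat_card_isConj_pairs_mul_eq (diagonalGL_const_mem_center x) hu,
      ← nat_card_centralizer_diagonalGL_ite hx1, nat_card_isConj_mul_nat_card_centralizer]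
  have hpos : 0 < Nat.card (GL (Fin c) F) * Nat.card (GL (Fin d) F) :=
    Nat.mul_pos Nat.card_pos Nat.card_pos
  have key : Nat.card {gh : GL (Fin (c + d)) F × GL (Fin (c + d)) F |
      IsConj gh.1 t ∧ IsConj gh.2 u ∧ gh.1 * gh.2 = s} * ∏ i ∈ Finset.range c, (q ^ (i + 1) - 1) =
      q ^ (c * d) * ∏ i ∈ Finset.range c, (q ^ (d + i + 1) - 1) := by
    refine Nat.eq_of_mul_eq_mul_right hpos ?_
    rw [mul_right_comm, hcard, nat_card_GL_fin, nat_card_GL_fin, nat_card_GL_fin, hq]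
    exact prod_range_pow_sub_pow_add q c d
  convert key using 4
  ext gh
  simp [isConj_iff, Units.ext_iff, t, u, s, x, apply_ite Units.val]

/-- Let `ξ ∈ 𝔽_q \ {0, 1}` and `c, d ≥ 1`. The number `N` of pairs `(g, h)` in
`GL_{c+d}(𝔽_q)` with `g ∼ (ξ·I_c) ⊕ I_d`, `h ∼ (ξ·I_d) ⊕ I_c` and
`g·h = ξ·I_{c+d}` satisfies `N · ∏_{i=1}^{c} (q^i - 1) =
q^{cd} · ∏_{i=1}^{c} (q^{d+i} - 1)`, i.e. `N` is `q^{cd}` times the Gaussian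
binomial coefficient `[c+d choose c]_q`. -/
theorem structure_constant_scalar_blocks (q : ℕ) (hq : Fintype.card F = q)
    {c d : ℕ} (hc : 1 ≤ c) (hd : 1 ≤ d) (ξ : F) (hξ0 : ξ ≠ 0) (hξ1 : ξ ≠ 1) :
    Nat.card {gh : GL (Fin (c + d)) F × GL (Fin (c + d)) F |
      (∃ z : GL (Fin (c + d)) F,
        ((z * gh.1 * z⁻¹ : GL (Fin (c + d)) F) : Matrix (Fin (c + d)) (Fin (c + d)) F) =
          Matrix.diagonal (fun i : Fin (c + d) => if (i : ℕ) < c then ξ else 1)) ∧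
      (∃ z : GL (Fin (c + d)) F,
        ((z * gh.2 * z⁻¹ : GL (Fin (c + d)) F) : Matrix (Fin (c + d)) (Fin (c + d)) F) =
          Matrix.diagonal (fun i : Fin (c + d) => if (i : ℕ) < d then ξ else 1)) ∧
      ((gh.1 * gh.2 : GL (Fin (c + d)) F) : Matrix (Fin (c + d)) (Fin (c + d)) F) =
        Matrix.diagonal (fun _ : Fin (c + d) => ξ)} *
      ∏ i ∈ Finset.range c, (q ^ (i + 1) - 1) =
    q ^ (c * d) * ∏ i ∈ Finset.range c, (q ^ (d + i + 1) - 1) :=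
  structure_constant_scalar_blocks_general q hq ξ hξ0 hξ1
end
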